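/- arXiv:1509.00130 — 9 statements merged into one kernel-verified Lean document; each statement's English description precedes it below -/
import Mathlib

section
/- (Unbiasedness.) In the sequential sensing process described in the context, for every k ∈ {1,…,K} the expected difference between the algorithm's posterior mean and the true posterior mean satisfies E[μ̂_k − μ_k] = M_k M_{k−1} ⋯ M_1 (μ̂ − μ), where M_j = I_n − (β_j λ̂_j/(β_j λ̂_j + σ²)) û_j û_jᵀ. In particular, if the assumed initial mean is accurate, μ̂ = μ, then E[μ̂_k − μ_k] = 0 for all k = 1,…,K. -/
open MeasureTheory ProbabilityTheory Matrix BigOperators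

/-- Spectral (ℓ²-operator) norm of a real square matrix. -/
noncomputable def specNorm {n : ℕ} (A : Matrix (Fin n) (Fin n) ℝ) : ℝ :=
  ‖LinearMap.toContinuousLinearMap (Matrix.toEuclideanLin A)‖

/-- The standard Gaussian measure on `ℝⁿ` (iid `N(0,1)` coordinates). -/
noncomputable def stdGaussianPi (n : ℕ) : Measure (Fin n → ℝ) :=
  Measure.pi fun _ => gaussianReal 0 1

/-- The square root of a positive semidefinite matrix, as `Matrix.PosSemidef.sqrt` was defined
in older Mathlib. -/
noncomputable def posSemidefSqrt {n : ℕ} {S : Matrix (Fin n) (Fin n) ℝ} (hS : S.PosSemidef) :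
    Matrix (Fin n) (Fin n) ℝ :=
  (hS.1.eigenvectorUnitary : Matrix (Fin n) (Fin n) ℝ) *
    diagonal ((↑) ∘ (√·) ∘ hS.1.eigenvalues) *
    (star hS.1.eigenvectorUnitary : Matrix (Fin n) (Fin n) ℝ)

/-- The multivariate Gaussian measure `N(μ, S)` on `ℝⁿ`, defined as the pushforward of the
standard Gaussian under the affine map `z ↦ μ + S^{1/2} z`. -/
noncomputable def multiGaussian {n : ℕ} (μ : Fin n → ℝ) (S : Matrix (Fin n) (Fin n) ℝ)
    (hS : S.PosSemidef) : Measure (Fin n → ℝ) :=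
  (stdGaussianPi n).map fun z => μ + (posSemidefSqrt hS).mulVec z

/-- The chi-squared distribution with `n` degrees of freedom, i.e. the Gamma distribution
with shape `n/2` and rate `1/2`. -/
noncomputable def chiSqMeasure (n : ℕ) : Measure ℝ := gammaMeasure ((n : ℝ) / 2) (1 / 2)

/-!
Both posterior means evolve by updates `m ↦ m + c (y - aᵀ m) g` with a deterministic scalar `c`
and gain vector `g`, driven by measurements with `E y = aᵀ μ`. Taking expectations, such an
update maps the bias `E m - μ` to `(1 - c g aᵀ) (E m - μ)`. The true posterior mean starts with
zero bias and therefore stays unbiased. For the algorithm, `û_k` is an eigenvector of `Σ̂_{k-1}`,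
so `Σ̂_{k-1} a_k = √β_k λ̂_k û_k` and the factor `1 - c g aᵀ` is exactly `M_k`.
-/

open scoped NNReal

namespace MeasureTheory
variable {Ω ι : Type*} [MeasurableSpace Ω] [Fintype ι] {P : Measure Ω} {f : Ω → ι → ℝ}

lemma Integrable.const_dotProduct (hf : Integrable f P) (a : ι → ℝ) :
    Integrable (fun ω => a ⬝ᵥ f ω) P :=
  (dotProductBilin ℝ ℝ a).toContinuousLinearMap.integrable_comp hf

lemma integral_const_dotProduct (hf : Integrable f P) (a : ι → ℝ) :
    ∫ ω, a ⬝ᵥ f ω ∂P = a ⬝ᵥ ∫ ω, f ω ∂P :=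
  (dotProductBilin ℝ ℝ a).toContinuousLinearMap.integral_comp_comm hf

lemma Integrable.const_mulVec (hf : Integrable f P) (B : Matrix ι ι ℝ) :
    Integrable (fun ω => B *ᵥ f ω) P :=
  B.mulVecLin.toContinuousLinearMap.integrable_comp hf

lemma integral_const_mulVec (hf : Integrable f P) (B : Matrix ι ι ℝ) :
    ∫ ω, B *ᵥ f ω ∂P = B *ᵥ ∫ ω, f ω ∂P :=
  B.mulVecLin.toContinuousLinearMap.integral_comp_comm hf

end MeasureTheory

instance (n : ℕ) : IsProbabilityMeasure (stdGaussianPi n) := by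
  rw [stdGaussianPi]; infer_instance

lemma integrable_id_stdGaussianPi (n : ℕ) : Integrable (fun z => z) (stdGaussianPi n) :=
  Integrable.of_eval fun _ => integrable_eval IsGaussian.integrable_id

lemma integral_id_stdGaussianPi (n : ℕ) : ∫ z, z ∂stdGaussianPi n = 0 := by
  funext i
  rw [eval_integral (f := fun z => z) (integrable_id_stdGaussianPi n).eval, stdGaussianPi,
    integral_eval, integral_id_gaussianReal, Pi.zero_apply]

section MultiGaussian
variable {n : ℕ} (μ : Fin n → ℝ) {S : Matrix (Fin n) (Fin n) ℝ} (hS : S.PosSemidef)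

lemma integrable_id_multiGaussian : Integrable id (multiGaussian μ S hS) := by
  rw [multiGaussian, integrable_map_measure aestronglyMeasurable_id (by fun_prop)]
  exact (integrable_const μ).add ((integrable_id_stdGaussianPi n).const_mulVec _)

lemma integral_id_multiGaussian : ∫ z, z ∂multiGaussian μ S hS = μ := by
  have hz := integrable_id_stdGaussianPi n
  rw [multiGaussian, integral_map (f := fun z => z) (by fun_prop) aestronglyMeasurable_id,
    integral_add (integrable_const μ) (hz.const_mulVec _), integral_const_mulVec hz,
    integral_id_stdGaussianPi, mulVec_zero, add_zero, integral_const, probReal_univ, one_smul]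

end MultiGaussian

namespace ProbabilityTheory.HasLaw
variable {Ω E : Type*} [MeasurableSpace Ω] [MeasurableSpace E] [NormedAddCommGroup E]
  {P : Measure Ω} {ν : Measure E} {X : Ω → E}

lemma integrable (hX : HasLaw X ν P) (hν : Integrable id ν) : Integrable X P := by
  rw [← hX.map_eq] at hν
  exact hν.comp_aemeasurable hX.aemeasurable

end ProbabilityTheory.HasLaw

section InnovationUpdate
variable {Ω ι : Type*} [MeasurableSpace Ω] [Fintype ι] {P : Measure Ω}
  {m : Ω → ι → ℝ} {y : Ω → ℝ} {μ : ι → ℝ}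

lemma one_sub_smul_vecMulVec_mulVec [DecidableEq ι] (c : ℝ) (g a v : ι → ℝ) :
    (1 - c • vecMulVec g a) *ᵥ v = v - (c * (a ⬝ᵥ v)) • g := by
  rw [sub_mulVec, one_mulVec, smul_mulVec, vecMulVec_mulVec, op_smul_eq_smul, smul_smul]

lemma integrable_innovation (hm : Integrable m P) (hy : Integrable y P) (c : ℝ) (a g : ι → ℝ) :
    Integrable (fun ω => (c * (y ω - a ⬝ᵥ m ω)) • g) P :=
  ((hy.sub (hm.const_dotProduct a)).const_mul c).smul_const g

lemma integral_update_sub [DecidableEq ι] (hm : Integrable m P) (hy : Integrable y P)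
    {a : ι → ℝ} (hy_mean : ∫ ω, y ω ∂P = a ⬝ᵥ μ) (c : ℝ) (g : ι → ℝ) :
    ∫ ω, (m ω + (c * (y ω - a ⬝ᵥ m ω)) • g) ∂P - μ =
      (1 - c • vecMulVec g a) *ᵥ (∫ ω, m ω ∂P - μ) := by
  rw [integral_add hm (integrable_innovation hm hy c a g), integral_smul_const,
    integral_const_mul, integral_sub hy (hm.const_dotProduct a), hy_mean,
    integral_const_dotProduct hm, one_sub_smul_vecMulVec_mulVec, dotProduct_sub]
  module

lemma integrable_and_integral_sub_of_update [DecidableEq ι] {K : ℕ} {m : ℕ → Ω → ι → ℝ}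
    {y : ℕ → Ω → ℝ} {a g : ℕ → ι → ℝ} {c : ℕ → ℝ} (hm₀ : Integrable (m 0) P)
    (hy : ∀ k < K, Integrable (y k) P) (hy_mean : ∀ k < K, ∫ ω, y k ω ∂P = a k ⬝ᵥ μ)
    (hrec : ∀ k < K, m (k + 1) = fun ω => m k ω + (c k * (y k ω - a k ⬝ᵥ m k ω)) • g k) :
    ∀ k ≤ K, Integrable (m k) P ∧ ∫ ω, m k ω ∂P - μ =
      ((List.range k).map fun j => 1 - c j • vecMulVec (g j) (a j)).reverse.prod *ᵥ
        (∫ ω, m 0 ω ∂P - μ) := by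
  intro k hk
  induction k with
  | zero => simpa using hm₀
  | succ k ih =>
    obtain ⟨hmk, hmeank⟩ := ih (by omega)
    have hkK : k < K := hk
    rw [hrec k hkK, integral_update_sub hmk (hy k hkK) (hy_mean k hkK), hmeank, List.range_succ,
      List.map_append, List.reverse_append, List.prod_append, ← mulVec_mulVec]
    exact ⟨hmk.add (integrable_innovation hmk (hy k hkK) _ _ _), by simp⟩

end InnovationUpdate

lemma smul_vecMulVec_mulVec_sqrt_smul {ι : Type*} [Fintype ι] {S : Matrix ι ι ℝ} {u : ι → ℝ}
    {l β : ℝ} (hβ : 0 ≤ β) (hu : S *ᵥ u = l • u) (c : ℝ) :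
    c • vecMulVec (S *ᵥ (√β • u)) (√β • u) = (β * l * c) • vecMulVec u u := by
  rw [mulVec_smul, hu, smul_smul]
  ext i j
  simp only [Matrix.smul_apply, vecMulVec_apply, Pi.smul_apply, smul_eq_mul]
  linear_combination (c * l * u i * u j) * Real.mul_self_sqrt hβ

section Measurement
variable {Ω : Type*} [MeasurableSpace Ω] {P : Measure Ω} {n : ℕ} {μ : Fin n → ℝ}
  {S : Matrix (Fin n) (Fin n) ℝ} {hS : S.PosSemidef} {x : Ω → Fin n → ℝ} {w : Ω → ℝ} {v : ℝ≥0}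

lemma integrable_dotProduct_add_of_hasLaw (hx : HasLaw x (multiGaussian μ S hS) P)
    (hw : HasLaw w (gaussianReal 0 v) P) (a : Fin n → ℝ) :
    Integrable (fun ω => a ⬝ᵥ x ω + w ω) P :=
  ((hx.integrable (integrable_id_multiGaussian μ hS)).const_dotProduct a).add
    (hw.integrable IsGaussian.integrable_id)

lemma integral_dotProduct_add_of_hasLaw (hx : HasLaw x (multiGaussian μ S hS) P)
    (hw : HasLaw w (gaussianReal 0 v) P) (a : Fin n → ℝ) :
    ∫ ω, a ⬝ᵥ x ω + w ω ∂P = a ⬝ᵥ μ := by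
  rw [integral_add ((hx.integrable (integrable_id_multiGaussian μ hS)).const_dotProduct a)
      (hw.integrable IsGaussian.integrable_id),
    integral_const_dotProduct (hx.integrable (integrable_id_multiGaussian μ hS)), hx.integral_eq,
    hw.integral_eq, integral_id_multiGaussian, integral_id_gaussianReal, add_zero]

end Measurement

theorem stmt3_general {n K : ℕ} (σ : ℝ)
    (S : Matrix (Fin n) (Fin n) ℝ) (hS : S.PosSemidef)
    (μ μhat : Fin n → ℝ)
    {Ω : Type} [MeasurableSpace Ω] (P : Measure Ω) [IsProbabilityMeasure P]
    (x : Ω → Fin n → ℝ) (w : Fin K → Ω → ℝ)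
    (hxmeas : Measurable x) (hwmeas : ∀ k, Measurable (w k))
    (hxlaw : P.map x = multiGaussian μ S hS)
    (hwlaw : ∀ k, P.map (w k) = gaussianReal 0 ⟨σ ^ 2, sq_nonneg σ⟩)
    -- deterministic data of the algorithm
    (lamhat : ℕ → ℝ) (uhat : ℕ → Fin n → ℝ) (β : ℕ → ℝ) (a : ℕ → Fin n → ℝ)
    (Shatseq Sseq : ℕ → Matrix (Fin n) (Fin n) ℝ)
    (μhatseq μseq : ℕ → Ω → Fin n → ℝ)
    (y : ℕ → Ω → ℝ)
    (hβ : ∀ k, 0 ≤ β k)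
    (ha : ∀ k, a k = Real.sqrt (β k) • uhat k)
    (hμhat0 : μhatseq 0 = fun _ => μhat) (hμ0 : μseq 0 = fun _ => μ)
    -- at step k+1 (1-based index k+1 ≤ K) we measure along an eigenvector of `Shatseq k`
    (heig : ∀ k (_ : k < K),
      (Shatseq k).mulVec (uhat (k + 1)) = lamhat (k + 1) • uhat (k + 1))
    (hy : ∀ k (hk : k < K), y (k + 1) = fun ω => a (k + 1) ⬝ᵥ x ω + w ⟨k, hk⟩ ω)
    (hμhatrec : ∀ k (_ : k < K), μhatseq (k + 1) = fun ω => μhatseq k ω +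
      ((β (k + 1) * lamhat (k + 1) + σ ^ 2)⁻¹ * (y (k + 1) ω - a (k + 1) ⬝ᵥ μhatseq k ω)) •
        (Shatseq k).mulVec (a (k + 1)))
    (hμrec : ∀ k (_ : k < K), μseq (k + 1) = fun ω => μseq k ω +
      ((a (k + 1) ⬝ᵥ (Sseq k).mulVec (a (k + 1)) + σ ^ 2)⁻¹ *
        (y (k + 1) ω - a (k + 1) ⬝ᵥ μseq k ω)) • (Sseq k).mulVec (a (k + 1))) :
    (∀ k, 1 ≤ k → k ≤ K →
      (∫ ω, (μhatseq k ω - μseq k ω) ∂P) =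
        (((List.range k).map (fun j =>
          (1 : Matrix (Fin n) (Fin n) ℝ) -
            (β (j + 1) * lamhat (j + 1) / (β (j + 1) * lamhat (j + 1) + σ ^ 2)) •
              Matrix.vecMulVec (uhat (j + 1)) (uhat (j + 1)))).reverse.prod).mulVec
          (μhat - μ)) ∧
    (μhat = μ → ∀ k, 1 ≤ k → k ≤ K →
      (∫ ω, (μhatseq k ω - μseq k ω) ∂P) = 0) := by
  have hx : HasLaw x (multiGaussian μ S hS) P := ⟨hxmeas.aemeasurable, hxlaw⟩
  have hw (k : Fin K) : HasLaw (w k) _ P := ⟨(hwmeas k).aemeasurable, hwlaw k⟩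
  have hy_int : ∀ k < K, Integrable (y (k + 1)) P := fun k hk => by
    rw [hy k hk]; exact integrable_dotProduct_add_of_hasLaw hx (hw _) _
  have hy_mean : ∀ k < K, ∫ ω, y (k + 1) ω ∂P = a (k + 1) ⬝ᵥ μ := fun k hk => by
    rw [hy k hk]; exact integral_dotProduct_add_of_hasLaw hx (hw _) _
  have htrue := integrable_and_integral_sub_of_update (hμ0 ▸ integrable_const μ)
    hy_int hy_mean hμrec
  have hest := integrable_and_integral_sub_of_update (hμhat0 ▸ integrable_const μhat)
    hy_int hy_mean hμhatrec
  have hgain : ∀ j < K,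
      (β (j + 1) * lamhat (j + 1) + σ ^ 2)⁻¹ • vecMulVec (Shatseq j *ᵥ a (j + 1)) (a (j + 1)) =
        (β (j + 1) * lamhat (j + 1) / (β (j + 1) * lamhat (j + 1) + σ ^ 2)) •
          vecMulVec (uhat (j + 1)) (uhat (j + 1)) := fun j hj => by
    rw [ha, smul_vecMulVec_mulVec_sqrt_smul (hβ _) (heig j hj), div_eq_mul_inv]
  refine (fun hdiff => ⟨hdiff, fun hμ k hk₁ hk => ?_⟩) fun k _ hk => ?_
  · obtain ⟨hmhat, hmeanhat⟩ := hest k hk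
    obtain ⟨hm, hmean⟩ := htrue k hk
    rw [integral_sub hmhat hm, ← sub_sub_sub_cancel_right _ _ μ, hmeanhat, hmean, hμ0, hμhat0,
      List.map_congr_left fun j hj => by rw [hgain j ((List.mem_range.1 hj).trans_le hk)]]
    simp
  · rw [hdiff k hk₁ hk, hμ, sub_self, mulVec_zero]

/-- Unbiasedness. In the sequential Info-Greedy sensing process with
assumed covariance `Shat` (eigenpairs `(lamhat k, uhat k)` used at step `k`) and true
covariance `S`, the expected difference between the algorithm's posterior mean and the true
posterior mean after `k` measurements is `M_k ⋯ M_1 (μ̂ − μ)`, where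
`M_j = I − (β_j λ̂_j/(β_j λ̂_j + σ²)) û_j û_jᵀ`.  In particular, if `μ̂ = μ` the estimator
is unbiased at every step. -/
theorem stmt3 {n K : ℕ} (σ : ℝ) (hσ : 0 < σ)
    (S Shat : Matrix (Fin n) (Fin n) ℝ) (hS : S.PosSemidef) (hShat : Shat.PosSemidef)
    (μ μhat : Fin n → ℝ)
    {Ω : Type} [MeasurableSpace Ω] (P : Measure Ω) [IsProbabilityMeasure P]
    (x : Ω → Fin n → ℝ) (w : Fin K → Ω → ℝ)
    (hxmeas : Measurable x) (hwmeas : ∀ k, Measurable (w k))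
    (hxlaw : P.map x = multiGaussian μ S hS)
    (hwlaw : ∀ k, P.map (w k) = gaussianReal 0 ⟨σ ^ 2, sq_nonneg σ⟩)
    (hwindep : iIndepFun w P)
    (hxw : IndepFun x (fun ω k => w k ω) P)
    -- deterministic data of the algorithm
    (lamhat : ℕ → ℝ) (uhat : ℕ → Fin n → ℝ) (β : ℕ → ℝ) (a : ℕ → Fin n → ℝ)
    (Shatseq Sseq : ℕ → Matrix (Fin n) (Fin n) ℝ)
    (μhatseq μseq : ℕ → Ω → Fin n → ℝ)
    (y : ℕ → Ω → ℝ)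
    (hβ : ∀ k, 0 ≤ β k) (hlam : ∀ k, 0 ≤ lamhat k)
    (hunit : ∀ k, uhat k ⬝ᵥ uhat k = 1)
    (ha : ∀ k, a k = Real.sqrt (β k) • uhat k)
    (hShat0 : Shatseq 0 = Shat) (hS0 : Sseq 0 = S)
    (hμhat0 : μhatseq 0 = fun _ => μhat) (hμ0 : μseq 0 = fun _ => μ)
    -- at step k+1 (1-based index k+1 ≤ K) we measure along an eigenvector of `Shatseq k`
    (heig : ∀ k (_ : k < K),
      (Shatseq k).mulVec (uhat (k + 1)) = lamhat (k + 1) • uhat (k + 1))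
    (hy : ∀ k (hk : k < K), y (k + 1) = fun ω => a (k + 1) ⬝ᵥ x ω + w ⟨k, hk⟩ ω)
    (hShatrec : ∀ k (_ : k < K), Shatseq (k + 1) = Shatseq k -
      (β (k + 1) * lamhat (k + 1) + σ ^ 2)⁻¹ •
        Matrix.vecMulVec ((Shatseq k).mulVec (a (k + 1))) ((a (k + 1)) ᵥ* Shatseq k))
    (hμhatrec : ∀ k (_ : k < K), μhatseq (k + 1) = fun ω => μhatseq k ω +
      ((β (k + 1) * lamhat (k + 1) + σ ^ 2)⁻¹ * (y (k + 1) ω - a (k + 1) ⬝ᵥ μhatseq k ω)) •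
        (Shatseq k).mulVec (a (k + 1)))
    (hSrec : ∀ k (_ : k < K), Sseq (k + 1) = Sseq k -
      (a (k + 1) ⬝ᵥ (Sseq k).mulVec (a (k + 1)) + σ ^ 2)⁻¹ •
        Matrix.vecMulVec ((Sseq k).mulVec (a (k + 1))) ((a (k + 1)) ᵥ* Sseq k))
    (hμrec : ∀ k (_ : k < K), μseq (k + 1) = fun ω => μseq k ω +
      ((a (k + 1) ⬝ᵥ (Sseq k).mulVec (a (k + 1)) + σ ^ 2)⁻¹ *
        (y (k + 1) ω - a (k + 1) ⬝ᵥ μseq k ω)) • (Sseq k).mulVec (a (k + 1))) :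
    (∀ k, 1 ≤ k → k ≤ K →
      (∫ ω, (μhatseq k ω - μseq k ω) ∂P) =
        (((List.range k).map (fun j =>
          (1 : Matrix (Fin n) (Fin n) ℝ) -
            (β (j + 1) * lamhat (j + 1) / (β (j + 1) * lamhat (j + 1) + σ ^ 2)) •
              Matrix.vecMulVec (uhat (j + 1)) (uhat (j + 1)))).reverse.prod).mulVec
          (μhat - μ)) ∧
    (μhat = μ → ∀ k, 1 ≤ k → k ≤ K →
      (∫ ω, (μhatseq k ω - μseq k ω) ∂P) = 0) :=
  stmt3_general σ S hS μ μhat P x w hxmeas hwmeas hxlaw hwlaw lamhat uhat β a Shatseq Sseq μhatseq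
    μseq y hβ ha hμhat0 hμ0 heig hy hμhatrec hμrec
end

section
/- (Recursion in covariance matrix mismatch.) Let Σ and Σ̂ be real symmetric positive semidefinite n×n matrices, let û be a unit eigenvector of Σ̂ with eigenvalue λ̂ ≥ 0, let β ≥ 0, σ > 0, and a = √β·û. Define the one-step updates Σ̂′ = Σ̂ − Σ̂ a aᵀ Σ̂/(βλ̂ + σ²) and Σ′ = Σ − Σ a aᵀ Σ/(aᵀΣa + σ²), and set δ = ‖Σ̂ − Σ‖ and δ′ = ‖Σ̂′ − Σ′‖. If β·δ ≤ 3σ²/4, then δ′ ≤ 4δ. -/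
/-! Write `E = Σ̂ - Σ`, `v = E û` and `e = ûᵀ v`. Since `Σ û = λ̂ û - v`, the two rank-one
corrections are `β λ̂² û ûᵀ / (βλ̂ + σ²)` and `β (λ̂ û - v)(λ̂ û - v)ᵀ / (β(λ̂ - e) + σ²)`, so
`Σ̂′ - Σ′` is `E` plus multiples of `û ûᵀ`, `û vᵀ + v ûᵀ` and `v vᵀ`. As `‖v‖, |e| ≤ δ`, the
hypothesis `βδ ≤ 3σ²/4` keeps the true denominator above `βλ̂ + σ²/4`, and the three correction
terms then add up to at most `3δ`. -/

open MeasureTheory ProbabilityTheory Matrix BigOperators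

open scoped Matrix.Norms.L2Operator
open WithLp (toLp)

lemma specNorm_eq_l2_opNorm {n : ℕ} (A : Matrix (Fin n) (Fin n) ℝ) : specNorm A = ‖A‖ := rfl

namespace Matrix

variable {n : Type*} [Fintype n]

lemma abs_dotProduct_le (x y : n → ℝ) : |x ⬝ᵥ y| ≤ ‖toLp 2 x‖ * ‖toLp 2 y‖ := by
  have := abs_real_inner_le_norm (toLp 2 x : EuclideanSpace ℝ n) (toLp 2 y)
  rwa [EuclideanSpace.inner_toLp_toLp, star_trivial, dotProduct_comm] at this

lemma norm_toLp_sq (x : n → ℝ) : ‖toLp 2 x‖ ^ 2 = x ⬝ᵥ x := by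
  rw [← real_inner_self_eq_norm_sq (toLp 2 x : EuclideanSpace ℝ n),
    EuclideanSpace.inner_toLp_toLp, star_trivial]

lemma IsSymm.vecMul_eq_mulVec {A : Matrix n n ℝ} (hA : A.IsSymm) (x : n → ℝ) :
    x ᵥ* A = A *ᵥ x := by
  nth_rw 1 [← hA.eq]
  exact vecMul_transpose A x

lemma mulVec_eq_smul_sub_sub_mulVec {R : Type*} [CommRing R] {S T : Matrix n n R} {u : n → R}
    {μ : R} (hu : T *ᵥ u = μ • u) : S *ᵥ u = μ • u - (T - S) *ᵥ u := by
  rw [sub_mulVec, hu]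
  abel

lemma sub_sub_vecMulVec_eq {S T : Matrix n n ℝ} (hS : S.IsSymm) (hT : T.IsSymm) {u : n → ℝ}
    {μ : ℝ} (hu : T *ᵥ u = μ • u) (s c d : ℝ) :
    (T - c⁻¹ • vecMulVec (T *ᵥ (s • u)) ((s • u) ᵥ* T))
        - (S - d⁻¹ • vecMulVec (S *ᵥ (s • u)) ((s • u) ᵥ* S)) =
      (T - S) + (s ^ 2 * μ ^ 2 * (d⁻¹ - c⁻¹)) • vecMulVec u u
        - (s ^ 2 * μ * d⁻¹) • (vecMulVec u ((T - S) *ᵥ u) + vecMulVec ((T - S) *ᵥ u) u)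
        + (s ^ 2 * d⁻¹) • vecMulVec ((T - S) *ᵥ u) ((T - S) *ᵥ u) := by
  rw [hS.vecMul_eq_mulVec, hT.vecMul_eq_mulVec, mulVec_smul, mulVec_smul, hu,
    mulVec_eq_smul_sub_sub_mulVec hu]
  ext i j
  simp only [sub_apply, add_apply, smul_apply, vecMulVec_apply, Pi.smul_apply, Pi.sub_apply,
    smul_eq_mul]
  ring

variable [DecidableEq n]

lemma l2_opNorm_vecMulVec {m 𝕜 : Type*} [Fintype m] [RCLike 𝕜] (x : m → 𝕜) (y : n → 𝕜) :
    ‖vecMulVec x (star y)‖ = ‖toLp 2 x‖ * ‖toLp 2 y‖ := by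
  rw [l2_opNorm_def, ← InnerProductSpace.symm_toEuclideanLin_rankOne, LinearEquiv.trans_apply,
    LinearEquiv.apply_symm_apply]
  exact InnerProductSpace.norm_rankOne _ _

lemma norm_add_smul_vecMulVec_le (E : Matrix n n ℝ) {u : n → ℝ} (hu : ‖toLp 2 u‖ = 1)
    (v : n → ℝ) (α γ κ : ℝ) :
    ‖E + α • vecMulVec u u - γ • (vecMulVec u v + vecMulVec v u) + κ • vecMulVec v v‖ ≤
      ‖E‖ + |α| + 2 * |γ| * ‖toLp 2 v‖ + |κ| * ‖toLp 2 v‖ ^ 2 := by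
  have hnorm (x y : n → ℝ) : ‖vecMulVec x y‖ = ‖toLp 2 x‖ * ‖toLp 2 y‖ := by
    simpa using l2_opNorm_vecMulVec x y
  have hsym : ‖vecMulVec u v + vecMulVec v u‖ ≤ 2 * ‖toLp 2 v‖ := by
    grw [norm_add_le, hnorm, hnorm, hu]
    linarith
  grw [norm_add_le, norm_sub_le, norm_add_le, norm_smul, norm_smul, norm_smul, hsym, hnorm,
    hnorm, hu, Real.norm_eq_abs, Real.norm_eq_abs, Real.norm_eq_abs]
  exact le_of_eq (by ring)

end Matrix

lemma abs_update_coeffs_le {β μ e δ r σ : ℝ} (hβ : 0 ≤ β) (hμ : 0 ≤ μ) (hσ : 0 < σ)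
    (he : |e| ≤ δ) (hr : 0 ≤ r) (hrδ : r ≤ δ) (hsmall : β * δ ≤ 3 * σ ^ 2 / 4) :
    |β * μ ^ 2 * ((β * (μ - e) + σ ^ 2)⁻¹ - (β * μ + σ ^ 2)⁻¹)|
        + 2 * |β * μ * (β * (μ - e) + σ ^ 2)⁻¹| * r + |β * (β * (μ - e) + σ ^ 2)⁻¹| * r ^ 2
      ≤ 3 * δ := by
  set D := β * (μ - e) + σ ^ 2
  set C := β * μ + σ ^ 2
  have hδ : 0 ≤ δ := (abs_nonneg e).trans he
  have hD : β * μ + σ ^ 2 / 4 ≤ D := by nlinarith [le_abs_self e]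
  have hD₀ : 0 < D := by nlinarith [mul_nonneg hβ hμ]
  have hC₀ : 0 < C := by positivity
  have hratio : β * μ / C ≤ 1 := (div_le_one hC₀).2 (by linarith [sq_nonneg σ])
  have hfirst : β * μ ^ 2 * (D⁻¹ - C⁻¹) = β * μ * (β * μ / C) * e / D := by
    field_simp
    ring
  have hr2 : β * r ^ 2 ≤ 3 * σ ^ 2 / 4 * δ := by
    calc β * r ^ 2 ≤ β * δ * δ := by rw [mul_assoc, ← sq]; gcongr
      _ ≤ 3 * σ ^ 2 / 4 * δ := by gcongr
  calc _ = (β * μ * (β * μ / C) * |e| + 2 * (β * μ) * r + β * r ^ 2) / D := by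
        rw [hfirst, abs_div, abs_mul, abs_of_nonneg (by positivity : 0 ≤ β * μ * (β * μ / C)),
          abs_of_pos hD₀, abs_of_nonneg (by positivity : 0 ≤ β * μ * D⁻¹),
          abs_of_nonneg (by positivity : 0 ≤ β * D⁻¹)]
        ring
    _ ≤ (β * μ * 1 * δ + 2 * (β * μ) * δ + 3 * σ ^ 2 / 4 * δ) / D := by gcongr
    _ = 3 * δ * (β * μ + σ ^ 2 / 4) / D := by ring
    _ ≤ 3 * δ := by
        rw [div_le_iff₀ hD₀]
        gcongr

/-- Recursion in covariance matrix mismatch. If `β·δ ≤ 3σ²/4`,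
then after one Info-Greedy update (assumed covariance updated with the assumed eigenvalue,
true covariance updated with the exact posterior formula) the mismatch grows at most by a
factor of 4. -/
theorem stmt6 {n : ℕ} (S Shat : Matrix (Fin n) (Fin n) ℝ)
    (hS : S.PosSemidef) (hShat : Shat.PosSemidef)
    (uhat : Fin n → ℝ) (hu : uhat ⬝ᵥ uhat = 1)
    (lamhat : ℝ) (hlam : 0 ≤ lamhat) (heig : Shat.mulVec uhat = lamhat • uhat)
    (β σ : ℝ) (hβ : 0 ≤ β) (hσ : 0 < σ)
    (a : Fin n → ℝ) (ha : a = Real.sqrt β • uhat)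
    (Shat' : Matrix (Fin n) (Fin n) ℝ)
    (hShat' : Shat' = Shat - (β * lamhat + σ ^ 2)⁻¹ •
      Matrix.vecMulVec (Shat.mulVec a) (Shat.vecMul a))
    (S' : Matrix (Fin n) (Fin n) ℝ)
    (hS' : S' = S - (a ⬝ᵥ S.mulVec a + σ ^ 2)⁻¹ •
      Matrix.vecMulVec (S.mulVec a) (S.vecMul a))
    (δ δ' : ℝ) (hδ : δ = specNorm (Shat - S)) (hδ' : δ' = specNorm (Shat' - S'))
    (hsmall : β * δ ≤ 3 * σ ^ 2 / 4) :
    δ' ≤ 4 * δ := by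
  rw [specNorm_eq_l2_opNorm] at hδ
  have hS_symm : S.IsSymm := isHermitian_iff_isSymm.1 hS.1
  have hsqrt : √β ^ 2 = β := Real.sq_sqrt hβ
  set v := (Shat - S) *ᵥ uhat
  set e := uhat ⬝ᵥ v
  have hunit : ‖toLp 2 uhat‖ = 1 := by
    rw [← pow_eq_one_iff_of_nonneg (norm_nonneg _) two_ne_zero, norm_toLp_sq, hu]
  have hv : ‖toLp 2 v‖ ≤ δ := by
    simpa [hunit, hδ] using l2_opNorm_mulVec (Shat - S) (toLp 2 uhat)
  have he : |e| ≤ δ := by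
    calc |e| ≤ ‖toLp 2 uhat‖ * ‖toLp 2 v‖ := abs_dotProduct_le uhat v
      _ ≤ δ := by rwa [hunit, one_mul]
  have hquad : a ⬝ᵥ S *ᵥ a = β * (lamhat - e) := by
    rw [ha, mulVec_smul, dotProduct_smul, smul_dotProduct, mulVec_eq_smul_sub_sub_mulVec heig,
      dotProduct_sub, dotProduct_smul, hu, smul_eq_mul, smul_eq_mul, smul_eq_mul, ← mul_assoc,
      ← sq, hsqrt, mul_one]
  rw [hδ', specNorm_eq_l2_opNorm, hShat', hS', hquad, ha, sub_sub_vecMulVec_eq hS_symm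
    (isHermitian_iff_isSymm.1 hShat.1) heig, hsqrt]
  calc _ ≤ δ + 3 * δ := by
        grw [norm_add_smul_vecMulVec_le _ hunit, ← hδ]
        linarith [abs_update_coeffs_le hβ hlam hσ he (norm_nonneg _) hv hsmall]
    _ = 4 * δ := by ring
end

section
/- (Recursion for the trace of the true covariance matrix.) Let Σ and Σ̂ be real symmetric positive semidefinite n×n matrices, let û be a unit eigenvector of Σ̂ with eigenvalue λ̂ ≥ 0, let β ≥ 0, σ > 0, a = √β·û, and δ = ‖Σ̂ − Σ‖. If δ ≤ λ̂, then the true one-step update Σ′ = Σ − Σ a aᵀ Σ/(aᵀΣa + σ²) satisfies tr(Σ′) ≤ tr(Σ) − βλ̂²/(βλ̂ + σ²) + 3βλ̂δ/(βλ̂ + σ² − βδ). -/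
/-!
The Rayleigh quotient `q = ûᵀΣû` is within `δ` of `λ̂`, because `λ̂ - q = ûᵀ(Σ̂ - Σ)û`, and
Cauchy–Schwarz gives `‖Σû‖² ≥ q²`. Since `tr Σ′ = tr Σ - β‖Σû‖²/(βq + σ²)` and
`x ↦ βx²/(βx + σ²)` increases on `[0, ∞)`, the trace drops by at least the value of that
function at `λ̂ - δ`, which is at most `2βλ̂δ/(β(λ̂ - δ) + σ²)` below its value at `λ̂`.
-/

open MeasureTheory ProbabilityTheory Matrix BigOperators

open WithLp in
theorem abs_dotProduct_mulVec_le_specNorm {n : ℕ} (M : Matrix (Fin n) (Fin n) ℝ)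
    {u : Fin n → ℝ} (hu : u ⬝ᵥ u = 1) : |u ⬝ᵥ M *ᵥ u| ≤ specNorm M := by
  set T := LinearMap.toContinuousLinearMap (Matrix.toEuclideanLin M)
  have hnorm : ‖toLp 2 u‖ = 1 := by
    rw [← pow_eq_one_iff_of_nonneg (norm_nonneg _) two_ne_zero, ← real_inner_self_eq_norm_sq,
      EuclideanSpace.inner_toLp_toLp]
    simpa using hu
  calc |u ⬝ᵥ M *ᵥ u| = |inner ℝ (T (toLp 2 u)) (toLp 2 u)| := rfl
    _ ≤ ‖T (toLp 2 u)‖ * ‖toLp 2 u‖ := abs_real_inner_le_norm _ _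
    _ ≤ ‖T‖ * ‖toLp 2 u‖ * ‖toLp 2 u‖ := by gcongr; exact T.le_opNorm _
    _ = specNorm M := by rw [hnorm, mul_one, mul_one]; rfl

theorem abs_eigenvalue_sub_dotProduct_mulVec_le {n : ℕ} {S Shat : Matrix (Fin n) (Fin n) ℝ}
    {u : Fin n → ℝ} (hu : u ⬝ᵥ u = 1) {lam : ℝ} (heig : Shat *ᵥ u = lam • u) :
    |lam - u ⬝ᵥ S *ᵥ u| ≤ specNorm (Shat - S) := by
  have : lam - u ⬝ᵥ S *ᵥ u = u ⬝ᵥ (Shat - S) *ᵥ u := by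
    rw [sub_mulVec, dotProduct_sub, heig, dotProduct_smul, hu, smul_eq_mul, mul_one]
  exact this ▸ abs_dotProduct_mulVec_le_specNorm _ hu

theorem sq_dotProduct_mulVec_le {n : Type*} [Fintype n] (S : Matrix n n ℝ)
    {u : n → ℝ} (hu : u ⬝ᵥ u = 1) : (u ⬝ᵥ S *ᵥ u) ^ 2 ≤ S *ᵥ u ⬝ᵥ S *ᵥ u := by
  have := Finset.sum_mul_sq_le_sq_mul_sq Finset.univ u (S *ᵥ u)
  simp only [sq] at this ⊢
  rwa [← dotProduct, ← dotProduct, hu, one_mul] at this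

theorem trace_sub_smul_vecMulVec_mulVec {n : Type*} [Fintype n] {S : Matrix n n ℝ}
    (hS : S.IsSymm) (a : n → ℝ) (c : ℝ) :
    (S - c • vecMulVec (S *ᵥ a) (a ᵥ* S)).trace = S.trace - c * (S *ᵥ a ⬝ᵥ S *ᵥ a) := by
  rw [trace_sub, trace_smul, trace_vecMulVec, ← mulVec_transpose, hS.eq, smul_eq_mul]

theorem monotoneOn_mul_sq_div_mul_add {β s : ℝ} (hβ : 0 ≤ β) (hs : 0 < s) :
    MonotoneOn (fun x ↦ β * x ^ 2 / (β * x + s)) (Set.Ici 0) := by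
  intro x (hx : 0 ≤ x) y (hy : 0 ≤ y) hxy
  rw [div_le_div_iff₀ (by positivity) (by positivity)]
  nlinarith [mul_nonneg (mul_nonneg (mul_nonneg hβ hβ) (mul_nonneg hx hy)) (sub_nonneg.2 hxy),
    mul_nonneg (mul_nonneg hβ hs.le) (mul_nonneg (sub_nonneg.2 hxy) (add_nonneg hx hy))]

theorem mul_sq_div_mul_add_sub_le {β s lam δ : ℝ} (hβ : 0 ≤ β) (hs : 0 < s) (hδ : 0 ≤ δ)
    (hδlam : δ ≤ lam) :
    β * lam ^ 2 / (β * lam + s) - β * (lam - δ) ^ 2 / (β * (lam - δ) + s)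
      ≤ 2 * β * lam * δ / (β * (lam - δ) + s) := by
  have hden : 0 < β * (lam - δ) + s := by nlinarith
  have hshrink : β * lam ^ 2 / (β * lam + s) ≤ β * lam ^ 2 / (β * (lam - δ) + s) := by
    gcongr; linarith
  have hnum : β * lam ^ 2 - β * (lam - δ) ^ 2 ≤ 2 * β * lam * δ := by
    nlinarith [mul_nonneg hβ (mul_nonneg hδ hδ)]
  calc _ ≤ β * lam ^ 2 / (β * (lam - δ) + s) - β * (lam - δ) ^ 2 / (β * (lam - δ) + s) := by
        linarith
    _ = (β * lam ^ 2 - β * (lam - δ) ^ 2) / (β * (lam - δ) + s) := sub_div .. |>.symm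
    _ ≤ _ := by gcongr

theorem stmt7_general {n : ℕ} (S Shat : Matrix (Fin n) (Fin n) ℝ)
    (hS : S.PosSemidef)
    (uhat : Fin n → ℝ) (hu : uhat ⬝ᵥ uhat = 1)
    (lamhat : ℝ) (heig : Shat.mulVec uhat = lamhat • uhat)
    (β σ : ℝ) (hβ : 0 ≤ β) (hσ : 0 < σ)
    (a : Fin n → ℝ) (ha : a = Real.sqrt β • uhat)
    (δ : ℝ) (hδ : δ = specNorm (Shat - S)) (hsmall : δ ≤ lamhat)
    (S' : Matrix (Fin n) (Fin n) ℝ)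
    (hS' : S' = S - (a ⬝ᵥ S.mulVec a + σ ^ 2)⁻¹ •
      Matrix.vecMulVec (S.mulVec a) (S.vecMul a)) :
    S'.trace ≤ S.trace - β * lamhat ^ 2 / (β * lamhat + σ ^ 2)
      + 3 * β * lamhat * δ / (β * lamhat + σ ^ 2 - β * δ) := by
  set q := uhat ⬝ᵥ S *ᵥ uhat
  have hδ0 : 0 ≤ δ := hδ ▸ norm_nonneg _
  have hq : |lamhat - q| ≤ δ := hδ ▸ abs_eigenvalue_sub_dotProduct_mulVec_le hu heig
  have hlamq : lamhat - δ ≤ q := by linarith [abs_le.1 hq]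
  have hlam : 0 ≤ lamhat - δ := sub_nonneg.2 hsmall
  have hq0 : 0 ≤ q := hlam.trans hlamq
  calc S'.trace = S.trace - β * (S *ᵥ uhat ⬝ᵥ S *ᵥ uhat) / (β * q + σ ^ 2) := by
        rw [hS', trace_sub_smul_vecMulVec_mulVec (isHermitian_iff_isSymm.1 hS.isHermitian), ha]
        simp only [mulVec_smul, dotProduct_smul, smul_dotProduct, smul_eq_mul, ← mul_assoc,
          Real.mul_self_sqrt hβ]
        ring
    _ ≤ S.trace - β * q ^ 2 / (β * q + σ ^ 2) := by
        gcongr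
        exact sq_dotProduct_mulVec_le S hu
    _ ≤ S.trace - β * (lamhat - δ) ^ 2 / (β * (lamhat - δ) + σ ^ 2) :=
        sub_le_sub_left (monotoneOn_mul_sq_div_mul_add hβ (pow_pos hσ 2) hlam hq0 hlamq) _
    _ ≤ S.trace - β * lamhat ^ 2 / (β * lamhat + σ ^ 2)
          + 2 * β * lamhat * δ / (β * (lamhat - δ) + σ ^ 2) := by
        linarith [mul_sq_div_mul_add_sub_le hβ (pow_pos hσ 2) hδ0 hsmall]
    _ ≤ _ := by
        rw [show β * lamhat + σ ^ 2 - β * δ = β * (lamhat - δ) + σ ^ 2 by ring]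
        gcongr
        · linarith
        · norm_num

/-- Recursion for the trace of the true covariance matrix. If the mismatch
`δ = ‖Σ̂ − Σ‖` satisfies `δ ≤ λ̂`, then the true one-step posterior update satisfies
`tr(Σ′) ≤ tr(Σ) − βλ̂²/(βλ̂ + σ²) + 3βλ̂δ/(βλ̂ + σ² − βδ)`. -/
theorem stmt7 {n : ℕ} (S Shat : Matrix (Fin n) (Fin n) ℝ)
    (hS : S.PosSemidef) (hShat : Shat.PosSemidef)
    (uhat : Fin n → ℝ) (hu : uhat ⬝ᵥ uhat = 1)
    (lamhat : ℝ) (hlam : 0 ≤ lamhat) (heig : Shat.mulVec uhat = lamhat • uhat)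
    (β σ : ℝ) (hβ : 0 ≤ β) (hσ : 0 < σ)
    (a : Fin n → ℝ) (ha : a = Real.sqrt β • uhat)
    (δ : ℝ) (hδ : δ = specNorm (Shat - S)) (hsmall : δ ≤ lamhat)
    (S' : Matrix (Fin n) (Fin n) ℝ)
    (hS' : S' = S - (a ⬝ᵥ S.mulVec a + σ ^ 2)⁻¹ •
      Matrix.vecMulVec (S.mulVec a) (S.vecMul a)) :
    S'.trace ≤ S.trace - β * lamhat ^ 2 / (β * lamhat + σ ^ 2)
      + 3 * β * lamhat * δ / (β * lamhat + σ ^ 2 - β * δ) :=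
  stmt7_general S Shat hS uhat hu lamhat heig β σ hβ hσ a ha δ hδ hsmall S' hS'
end

section
/- (Rank preservation of the posterior-covariance update.) Let X be a real symmetric positive semidefinite n×n matrix, h ∈ ℝⁿ, and σ > 0. Define Y = X − X h hᵀ X/(hᵀ X h + σ²). Then ker(Y) = ker(X); in particular rank(Y) = rank(X). -/
/-! If `Yv = 0` then `Xv = c t • Xh` with `t = hᵀXv`; applying `hᵀ` gives `t = c t (hᵀXh)`, so
`t = 0` as soon as `c (hᵀXh) ≠ 1`, and then `Xv = 0`. For the posterior update
`c = (hᵀXh + σ²)⁻¹` and `c (hᵀXh) = 1` would force `σ² = 0`. -/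

open MeasureTheory ProbabilityTheory Matrix BigOperators

namespace Matrix

variable {m n K : Type*} [Fintype n] [Field K]

theorem sub_smul_vecMulVec_mulVec {R : Type*} [CommRing R] (A : Matrix m n R) (c : R)
    (u : m → R) (w v : n → R) :
    (A - c • vecMulVec u w) *ᵥ v = A *ᵥ v - (c * (w ⬝ᵥ v)) • u := by
  rw [sub_mulVec, smul_mulVec, vecMulVec_mulVec, op_smul_eq_smul, smul_smul]

theorem rank_eq_of_ker_mulVecLin_eq {A B : Matrix m n K}
    (hAB : LinearMap.ker A.mulVecLin = LinearMap.ker B.mulVecLin) : A.rank = B.rank := by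
  have hA := LinearMap.finrank_range_add_finrank_ker A.mulVecLin
  have hB := LinearMap.finrank_range_add_finrank_ker B.mulVecLin
  rw [hAB] at hA
  exact Nat.add_right_cancel (hA.trans hB.symm)

theorem ker_mulVecLin_sub_smul_vecMulVec {X : Matrix n n K} {h : n → K} {c : K}
    (hc : c * (h ⬝ᵥ X *ᵥ h) ≠ 1) :
    LinearMap.ker (X - c • vecMulVec (X *ᵥ h) (h ᵥ* X)).mulVecLin = LinearMap.ker X.mulVecLin := by
  ext v
  simp only [LinearMap.mem_ker, mulVecLin_apply, sub_smul_vecMulVec_mulVec, ← dotProduct_mulVec]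
  constructor
  · intro hv
    have hXv : X *ᵥ v = (c * (h ⬝ᵥ X *ᵥ v)) • X *ᵥ h := sub_eq_zero.mp hv
    have ht : h ⬝ᵥ X *ᵥ v = c * (h ⬝ᵥ X *ᵥ h) * (h ⬝ᵥ X *ᵥ v) := by
      conv_lhs => rw [hXv]
      rw [dotProduct_smul, smul_eq_mul]
      ring
    have ht0 : h ⬝ᵥ X *ᵥ v = 0 := by
      have : (1 - c * (h ⬝ᵥ X *ᵥ h)) * (h ⬝ᵥ X *ᵥ v) = 0 := by linear_combination ht
      exact (mul_eq_zero.mp this).resolve_left (sub_ne_zero.mpr hc.symm)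
    simpa [ht0] using hXv
  · intro hv
    simp [hv]

end Matrix

theorem stmt8_general {n : ℕ} (X : Matrix (Fin n) (Fin n) ℝ)
    (h : Fin n → ℝ) (σ : ℝ) (hσ : 0 < σ)
    (Y : Matrix (Fin n) (Fin n) ℝ)
    (hY : Y = X - (h ⬝ᵥ X.mulVec h + σ ^ 2)⁻¹ • Matrix.vecMulVec (X.mulVec h) (X.vecMul h)) :
    LinearMap.ker Y.mulVecLin = LinearMap.ker X.mulVecLin ∧ Y.rank = X.rank := by
  have hc : (h ⬝ᵥ X *ᵥ h + σ ^ 2)⁻¹ * (h ⬝ᵥ X *ᵥ h) ≠ 1 := by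
    intro h1
    have hne : h ⬝ᵥ X *ᵥ h + σ ^ 2 ≠ 0 := mt inv_eq_zero.mpr (left_ne_zero_of_mul_eq_one h1)
    rw [inv_mul_eq_one₀ hne] at h1
    linarith [pow_pos hσ 2]
  have hker := hY ▸ ker_mulVecLin_sub_smul_vecMulVec hc
  exact ⟨hker, rank_eq_of_ker_mulVecLin_eq hker⟩

/-- The posterior-covariance update `Y = X − X h hᵀ X/(hᵀXh + σ²)` of a
positive semidefinite matrix `X` has the same kernel (and hence the same rank) as `X`. -/
theorem stmt8 {n : ℕ} (X : Matrix (Fin n) (Fin n) ℝ) (hX : X.PosSemidef)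
    (h : Fin n → ℝ) (σ : ℝ) (hσ : 0 < σ)
    (Y : Matrix (Fin n) (Fin n) ℝ)
    (hY : Y = X - (h ⬝ᵥ X.mulVec h + σ ^ 2)⁻¹ • Matrix.vecMulVec (X.mulVec h) (X.vecMul h)) :
    LinearMap.ker Y.mulVecLin = LinearMap.ker X.mulVecLin ∧ Y.rank = X.rank :=
  stmt8_general X h σ hσ Y hY
end

section
/- (Additional power required under covariance mismatch.) Let Σ, Σ̂ be real symmetric positive semidefinite n×n matrices with eigenvalues λ₁ ≥ ⋯ ≥ λ_n and λ̂₁ ≥ ⋯ ≥ λ̂_n respectively, where Σ has rank s ≥ 1 (so λ_s > 0 and λ_k = 0 for k > s). Let σ > 0 and χ > 0, and let 1 ≤ K ≤ s be such that λ_k ≥ χ for k ≤ K and λ_k < χ for K < k ≤ n. Suppose δ₀ := ‖Σ̂ − Σ‖ ≤ χ/4^{s+1}, and set δ_s = 4^s·δ₀. Define P_ideal = Σ_{k=1}^{K} σ²(1/χ − 1/λ_k) and P_mismatch = Σ_{k ≤ s, λ̂_k > χ − δ_s} σ²(1/(χ − δ_s) − 1/λ̂_k). Then P_mismatch < P_ideal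 + [ (20/51)·s + (1/272)·K ]·σ²/χ. -/
open MeasureTheory ProbabilityTheory Matrix BigOperators

/-!
Weyl's inequality gives `λ̂_k ≤ λ_k + δ₀` for every `k`: counting dimensions, the span of the
eigenvectors of `Σ` for `λ_k, …, λ_n` meets the span of those of `Σ̂` for `λ̂_1, …, λ̂_k` in a
nonzero vector, whose Rayleigh quotient is at most `λ_k` for `Σ` and at least `λ̂_k` for `Σ̂`.
Moreover `4 δ₀ ≤ δ_s ≤ χ / 4`. Under these two constraints a mismatched term with `k ≤ K` exceeds
the ideal one by less than `(19/48)/χ = (20/51 + 1/272)/χ`, and one with `K < k ≤ s` (where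
`λ̂_k < χ + δ₀`) is at most `(20/51)/χ`; both bounds are attained at `δ₀ = δ_s / 4 = χ / 16`.
-/

open scoped RealInnerProductSpace

namespace OrthonormalBasis

variable {ι E : Type*} [Fintype ι] [NormedAddCommGroup E] [InnerProductSpace ℝ E]
  (b : OrthonormalBasis ι ℝ E)

lemma inner_eq_zero_of_mem_span_image {I : Set ι} {x : E}
    (hx : x ∈ Submodule.span ℝ (b '' I)) {j : ι} (hj : j ∉ I) : ⟪b j, x⟫ = 0 := by
  have hle : Submodule.span ℝ (b '' I) ≤ (ℝ ∙ b j)ᗮ := by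
    rw [Submodule.span_le]
    rintro _ ⟨i, hi, rfl⟩
    rw [SetLike.mem_coe, Submodule.mem_orthogonal_singleton_iff_inner_right]
    exact b.orthonormal.inner_eq_zero (by rintro rfl; exact hj hi)
  exact (Submodule.mem_orthogonal_singleton_iff_inner_right).mp (hle hx)

variable {T : E →ₗ[ℝ] E} {μ : ι → ℝ}

lemma inner_apply_self_eq_sum (hT : ∀ i, T (b i) = μ i • b i) (x : E) :
    ⟪T x, x⟫ = ∑ i, μ i * ⟪b i, x⟫ ^ 2 := by
  nth_rw 1 [← b.sum_repr' x]
  simp only [map_sum, map_smul, hT, sum_inner, inner_smul_left, conj_trivial]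
  exact Finset.sum_congr rfl fun i _ => by ring

lemma inner_apply_self_le_of_mem_span (hT : ∀ i, T (b i) = μ i • b i) {I : Set ι} {c : ℝ}
    (hμ : ∀ i ∈ I, μ i ≤ c) {x : E} (hx : x ∈ Submodule.span ℝ (b '' I)) :
    ⟪T x, x⟫ ≤ c * ‖x‖ ^ 2 := by
  rw [b.inner_apply_self_eq_sum hT, ← b.sum_sq_inner_right, Finset.mul_sum]
  refine Finset.sum_le_sum fun i _ => ?_
  by_cases hi : i ∈ I
  · exact mul_le_mul_of_nonneg_right (hμ i hi) (sq_nonneg _)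
  · simp [b.inner_eq_zero_of_mem_span_image hx hi]

lemma le_inner_apply_self_of_mem_span (hT : ∀ i, T (b i) = μ i • b i) {I : Set ι} {c : ℝ}
    (hμ : ∀ i ∈ I, c ≤ μ i) {x : E} (hx : x ∈ Submodule.span ℝ (b '' I)) :
    c * ‖x‖ ^ 2 ≤ ⟪T x, x⟫ := by
  rw [b.inner_apply_self_eq_sum hT, ← b.sum_sq_inner_right, Finset.mul_sum]
  refine Finset.sum_le_sum fun i _ => ?_
  by_cases hi : i ∈ I
  · exact mul_le_mul_of_nonneg_right (hμ i hi) (sq_nonneg _)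
  · simp [b.inner_eq_zero_of_mem_span_image hx hi]

lemma finrank_span_image (s : Finset ι) :
    Module.finrank ℝ (Submodule.span ℝ (b '' s)) = s.card := by
  rw [Set.image_eq_range]
  exact (finrank_span_eq_card
    (b.orthonormal.linearIndependent.comp ((↑) : s → ι) Subtype.val_injective)).trans (by simp)

end OrthonormalBasis

theorem weyl_le_add {E : Type*} [NormedAddCommGroup E] [InnerProductSpace ℝ E] {n : ℕ}
    (b c : OrthonormalBasis (Fin n) ℝ E) {T U : E →ₗ[ℝ] E} {μ ν : Fin n → ℝ}
    (hμ : Antitone μ) (hν : Antitone ν) (hT : ∀ i, T (b i) = μ i • b i)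
    (hU : ∀ i, U (c i) = ν i • c i) {d : ℝ} (hd : ∀ x, ⟪(U - T) x, x⟫ ≤ d * ‖x‖ ^ 2)
    (k : Fin n) : ν k ≤ μ k + d := by
  have : FiniteDimensional ℝ E := b.toBasis.finiteDimensional_of_finite
  set V := Submodule.span ℝ (b '' ↑(Finset.Ici k))
  set W := Submodule.span ℝ (c '' ↑(Finset.Iic k))
  have hVW : ¬ Disjoint V W := fun h => by
    have := Submodule.finrank_add_finrank_le_of_disjoint h
    rw [b.finrank_span_image, c.finrank_span_image, Fin.card_Ici, Fin.card_Iic,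
      Module.finrank_eq_card_basis b.toBasis, Fintype.card_fin] at this
    omega
  obtain ⟨x, hxV, hxW, hx⟩ : ∃ x ∈ V, x ∈ W ∧ x ≠ 0 := by
    simpa [Submodule.disjoint_def] using hVW
  have hA : ⟪T x, x⟫ ≤ μ k * ‖x‖ ^ 2 :=
    b.inner_apply_self_le_of_mem_span hT (fun i hi => hμ (Finset.mem_Ici.mp hi)) hxV
  have hB : ν k * ‖x‖ ^ 2 ≤ ⟪U x, x⟫ :=
    c.le_inner_apply_self_of_mem_span hU (fun i hi => hν (Finset.mem_Iic.mp hi)) hxW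
  have hUT := hd x
  rw [LinearMap.sub_apply, inner_sub_left] at hUT
  have hx2 : 0 < ‖x‖ ^ 2 := by positivity
  exact le_of_mul_le_mul_right (by linarith [add_mul (μ k) d (‖x‖ ^ 2)]) hx2

lemma Matrix.IsHermitian.toEuclideanLin_eigenvectorBasis {n : ℕ}
    {A : Matrix (Fin n) (Fin n) ℝ} (hA : A.IsHermitian) (j : Fin n) :
    toEuclideanLin A (hA.eigenvectorBasis j) = hA.eigenvalues j • hA.eigenvectorBasis j :=
  (WithLp.equiv 2 (Fin n → ℝ)).injective (hA.mulVec_eigenvectorBasis j)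

lemma inner_toEuclideanLin_self_le_specNorm {n : ℕ} (A : Matrix (Fin n) (Fin n) ℝ)
    (x : EuclideanSpace ℝ (Fin n)) : ⟪toEuclideanLin A x, x⟫ ≤ specNorm A * ‖x‖ ^ 2 :=
  calc ⟪toEuclideanLin A x, x⟫ ≤ ‖toEuclideanLin A x‖ * ‖x‖ := real_inner_le_norm _ _
    _ ≤ specNorm A * ‖x‖ * ‖x‖ := by
      gcongr; exact (LinearMap.toContinuousLinearMap (toEuclideanLin A)).le_opNorm x
    _ = specNorm A * ‖x‖ ^ 2 := by ring

theorem Matrix.IsHermitian.sorted_eigenvalue_le_add_specNorm {n : ℕ}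
    {A B : Matrix (Fin n) (Fin n) ℝ} (hA : A.IsHermitian) (hB : B.IsHermitian)
    {lam lamhat : Fin n → ℝ} (hlam : Antitone lam) (hlamhat : Antitone lamhat)
    {e f : Equiv.Perm (Fin n)} (he : ∀ i, lam i = hA.eigenvalues (e i))
    (hf : ∀ i, lamhat i = hB.eigenvalues (f i)) (k : Fin n) :
    lamhat k ≤ lam k + specNorm (B - A) := by
  refine weyl_le_add (hA.eigenvectorBasis.reindex e.symm) (hB.eigenvectorBasis.reindex f.symm)
    (T := toEuclideanLin A) (U := toEuclideanLin B) hlam hlamhat (fun i => ?_) (fun i => ?_)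
    (fun x => ?_) k
  · simpa [he] using hA.toEuclideanLin_eigenvectorBasis (e i)
  · simpa [hf] using hB.toEuclideanLin_eigenvectorBasis (f i)
  · simpa using inner_toEuclideanLin_self_le_specNorm (B - A) x

section
variable {χ δ Δ l lh : ℝ}

lemma one_div_sub_one_div_lt_of_le (hχ : 0 < χ) (hδ : 0 ≤ δ) (hδΔ : 4 * δ ≤ Δ)
    (hΔχ : 4 * Δ ≤ χ) (hl : χ ≤ l) (hlh : lh ≤ l + δ) (h : χ - Δ < lh) :
    1 / (χ - Δ) - 1 / lh < 1 / χ - 1 / l + 19 / 48 * (1 / χ) := by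
  have hl0 : 0 < l := hχ.trans_le hl
  have hlh0 : 0 < lh := by linarith
  have h1 : 1 / (χ - Δ) ≤ 4 / 3 * (1 / χ) := by
    rw [div_le_iff₀ (by linarith), mul_one_div, div_mul_eq_mul_div, le_div_iff₀ hχ]
    linarith
  have h2 : 1 / l - 1 / (l + δ) < 1 / 16 * (1 / χ) := by
    rw [div_sub_div _ _ hl0.ne' (by positivity), mul_one_div,
      div_lt_div_iff₀ (by positivity) (by positivity)]
    nlinarith
  have h3 : 1 / (l + δ) ≤ 1 / lh := one_div_le_one_div_of_le hlh0 hlh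
  linarith

lemma one_div_sub_one_div_le_of_lt (hχ : 0 < χ) (hδ : 0 ≤ δ) (hδΔ : 4 * δ ≤ Δ)
    (hΔχ : 4 * Δ ≤ χ) (hl : l < χ) (hlh : lh ≤ l + δ) (h : χ - Δ < lh) :
    1 / (χ - Δ) - 1 / lh ≤ 20 / 51 * (1 / χ) := by
  have hlh0 : 0 < lh := by linarith
  have h1 : 1 / (χ + δ) ≤ 1 / lh := one_div_le_one_div_of_le hlh0 (by linarith)
  have h2 : 1 / (χ - Δ) - 1 / (χ + δ) ≤ 20 / 51 * (1 / χ) := by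
    rw [div_sub_div _ _ (by linarith) (by positivity), mul_one_div,
      div_le_div_iff₀ (by nlinarith) hχ]
    nlinarith [mul_nonneg (sub_nonneg.2 hδΔ) (sub_nonneg.2 hΔχ), mul_nonneg hδ (sub_nonneg.2 hΔχ),
      mul_nonneg (sub_nonneg.2 hδΔ) hχ.le]
  linarith
end

lemma Fin.card_filter_le_val_lt_le_sub {n K s : ℕ} :
    (Finset.univ.filter fun k : Fin n => K ≤ (k : ℕ) ∧ (k : ℕ) < s).card ≤ s - K := by
  rw [← Nat.card_Ico]
  exact Finset.card_le_card_of_injOn (↑) (fun k hk => by simpa using (Finset.mem_filter.1 hk).2)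
    (Fin.val_injective.injOn)

theorem sum_mismatch_lt_sum_ideal_add {n s K : ℕ} (hK1 : 1 ≤ K) (hKn : K ≤ n) (hKs : K ≤ s)
    {χ δ Δ : ℝ} (hχ : 0 < χ) (hδ : 0 ≤ δ) (hδΔ : 4 * δ ≤ Δ) (hΔχ : 4 * Δ ≤ χ)
    {lam lamhat : Fin n → ℝ} (hweyl : ∀ k, lamhat k ≤ lam k + δ)
    (habove : ∀ k : Fin n, (k : ℕ) < K → χ ≤ lam k)
    (hbelow : ∀ k : Fin n, K ≤ (k : ℕ) → lam k < χ) :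
    ∑ k ∈ Finset.univ.filter (fun k : Fin n => (k : ℕ) < s ∧ χ - Δ < lamhat k),
        (1 / (χ - Δ) - 1 / lamhat k) <
      ∑ k ∈ Finset.univ.filter (fun k : Fin n => (k : ℕ) < K), (1 / χ - 1 / lam k) +
        (20 / 51 * s + 1 / 272 * K) / χ := by
  classical
  set P := fun k : Fin n => (k : ℕ) < s ∧ χ - Δ < lamhat k
  set below := Finset.univ.filter fun k : Fin n => (k : ℕ) < K
  have hlow : ∑ k ∈ below, (if P k then 1 / (χ - Δ) - 1 / lamhat k else 0) <
      ∑ k ∈ below, (1 / χ - 1 / lam k + 19 / 48 * (1 / χ)) := by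
    refine Finset.sum_lt_sum_of_nonempty ⟨⟨0, by omega⟩, by simp [below]; omega⟩ fun k hk => ?_
    have hkK : (k : ℕ) < K := (Finset.mem_filter.1 hk).2
    split_ifs with hP
    · exact one_div_sub_one_div_lt_of_le hχ hδ hδΔ hΔχ (habove k hkK) (hweyl k) hP.2
    · have := one_div_le_one_div_of_le hχ (habove k hkK)
      positivity
  have hhigh : ∑ k ∈ Finset.univ.filter (fun k : Fin n => ¬ (k : ℕ) < K),
      (if P k then 1 / (χ - Δ) - 1 / lamhat k else 0) ≤ (s - K : ℕ) * (20 / 51 * (1 / χ)) := by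
    calc _ ≤ ∑ k ∈ Finset.univ.filter (fun k : Fin n => ¬ (k : ℕ) < K),
          (if (k : ℕ) < s then 20 / 51 * (1 / χ) else 0) := by
          refine Finset.sum_le_sum fun k hk => ?_
          have hKk : K ≤ (k : ℕ) := not_lt.1 (Finset.mem_filter.1 hk).2
          split_ifs with hP hks
          · exact one_div_sub_one_div_le_of_lt hχ hδ hδΔ hΔχ (hbelow k hKk) (hweyl k) hP.2
          · exact absurd hP.1 hks
          · positivity
          · rfl
      _ = (Finset.univ.filter fun k : Fin n => K ≤ (k : ℕ) ∧ (k : ℕ) < s).card *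
          (20 / 51 * (1 / χ)) := by
          rw [← Finset.sum_filter, Finset.filter_filter, Finset.sum_const, nsmul_eq_mul]
          simp only [not_lt]
      _ ≤ _ := by gcongr; exact Fin.card_filter_le_val_lt_le_sub
  have hcard : (below.card : ℝ) = K := by
    simp [below, Fin.card_filter_val_lt, hKn]
  have hconst : (20 / 51 * s + 1 / 272 * K) / χ =
      K * (19 / 48 * (1 / χ)) + (s - K) * (20 / 51 * (1 / χ)) := by
    field_simp; ring
  rw [Finset.sum_add_distrib, Finset.sum_const, nsmul_eq_mul, hcard] at hlow
  rw [Nat.cast_sub hKs] at hhigh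
  rw [Finset.sum_filter, ← Finset.sum_filter_add_sum_filter_not _ (fun k : Fin n => (k : ℕ) < K)]
  linarith

theorem stmt9_general {n s K : ℕ} (hs : 1 ≤ s) (hK1 : 1 ≤ K) (hKs : K ≤ s)
    (σ χ : ℝ) (hσ : 0 < σ) (hχ : 0 < χ)
    (S Shat : Matrix (Fin n) (Fin n) ℝ) (hS : S.PosSemidef) (hShat : Shat.PosSemidef)
    (hrank : S.rank = s)
    -- `lam` enumerates the eigenvalues of `S` in decreasing order
    (lam : Fin n → ℝ) (hlam_anti : Antitone lam)
    (hlam_eig : ∃ e : Equiv.Perm (Fin n), ∀ i, lam i = hS.1.eigenvalues (e i))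
    -- `lamhat` enumerates the eigenvalues of `Shat` in decreasing order
    (lamhat : Fin n → ℝ) (hlamhat_anti : Antitone lamhat)
    (hlamhat_eig : ∃ e : Equiv.Perm (Fin n), ∀ i, lamhat i = hShat.1.eigenvalues (e i))
    -- the first K eigenvalues are ≥ χ, the rest are < χ
    (habove : ∀ k : Fin n, (k : ℕ) < K → χ ≤ lam k)
    (hbelow : ∀ k : Fin n, K ≤ (k : ℕ) → lam k < χ)
    (δ0 δs : ℝ) (hδ0 : δ0 = specNorm (Shat - S)) (hδ0small : δ0 ≤ χ / 4 ^ (s + 1))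
    (hδs : δs = 4 ^ s * δ0)
    (Pideal Pmismatch : ℝ)
    (hPideal : Pideal = ∑ k ∈ Finset.univ.filter (fun k : Fin n => (k : ℕ) < K),
      σ ^ 2 * (1 / χ - 1 / lam k))
    (hPmismatch : Pmismatch = ∑ k ∈ Finset.univ.filter
        (fun k : Fin n => (k : ℕ) < s ∧ χ - δs < lamhat k),
      σ ^ 2 * (1 / (χ - δs) - 1 / lamhat k)) :
    Pmismatch < Pideal + ((20 / 51) * s + (1 / 272) * K) * σ ^ 2 / χ := by
  obtain ⟨e, he⟩ := hlam_eig
  obtain ⟨f, hf⟩ := hlamhat_eig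
  have hweyl (k : Fin n) : lamhat k ≤ lam k + δ0 :=
    hδ0 ▸ hS.1.sorted_eigenvalue_le_add_specNorm hShat.1 hlam_anti hlamhat_anti he hf k
  have hδ0_nonneg : 0 ≤ δ0 := hδ0 ▸ norm_nonneg _
  have hδΔ : 4 * δ0 ≤ δs :=
    hδs ▸ mul_le_mul_of_nonneg_right (le_self_pow₀ (by norm_num) (by omega)) hδ0_nonneg
  have hΔχ : 4 * δs ≤ χ := by
    rw [hδs, ← mul_assoc, ← pow_succ']
    exact (le_div_iff₀' (by positivity)).1 hδ0small
  have hKn : K ≤ n := hKs.trans ((hrank ▸ S.rank_le_card_width).trans_eq (Fintype.card_fin n))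
  have key :=
    sum_mismatch_lt_sum_ideal_add hK1 hKn hKs hχ hδ0_nonneg hδΔ hΔχ hweyl habove hbelow
  rw [hPmismatch, hPideal, ← Finset.mul_sum, ← Finset.mul_sum]
  calc _ < σ ^ 2 * (∑ k ∈ Finset.univ.filter (fun k : Fin n => (k : ℕ) < K),
        (1 / χ - 1 / lam k) + (20 / 51 * s + 1 / 272 * K) / χ) :=
        mul_lt_mul_of_pos_left key (by positivity)
    _ = _ := by ring

/-- Additional power required under covariance mismatch. -/
theorem stmt9 {n s K : ℕ} (hs : 1 ≤ s) (hK1 : 1 ≤ K) (hKs : K ≤ s)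
    (σ χ : ℝ) (hσ : 0 < σ) (hχ : 0 < χ)
    (S Shat : Matrix (Fin n) (Fin n) ℝ) (hS : S.PosSemidef) (hShat : Shat.PosSemidef)
    (hrank : S.rank = s)
    -- `lam` enumerates the eigenvalues of `S` in decreasing order
    (lam : Fin n → ℝ) (hlam_anti : Antitone lam)
    (hlam_eig : ∃ e : Equiv.Perm (Fin n), ∀ i, lam i = hS.1.eigenvalues (e i))
    -- `lamhat` enumerates the eigenvalues of `Shat` in decreasing order
    (lamhat : Fin n → ℝ) (hlamhat_anti : Antitone lamhat)
    (hlamhat_eig : ∃ e : Equiv.Perm (Fin n), ∀ i, lamhat i = hShat.1.eigenvalues (e i))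
    -- rank-s structure: the first s eigenvalues are positive, the rest vanish
    (hpos : ∀ k : Fin n, (k : ℕ) < s → 0 < lam k)
    (hzero : ∀ k : Fin n, s ≤ (k : ℕ) → lam k = 0)
    -- the first K eigenvalues are ≥ χ, the rest are < χ
    (habove : ∀ k : Fin n, (k : ℕ) < K → χ ≤ lam k)
    (hbelow : ∀ k : Fin n, K ≤ (k : ℕ) → lam k < χ)
    (δ0 δs : ℝ) (hδ0 : δ0 = specNorm (Shat - S)) (hδ0small : δ0 ≤ χ / 4 ^ (s + 1))
    (hδs : δs = 4 ^ s * δ0)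
    (Pideal Pmismatch : ℝ)
    (hPideal : Pideal = ∑ k ∈ Finset.univ.filter (fun k : Fin n => (k : ℕ) < K),
      σ ^ 2 * (1 / χ - 1 / lam k))
    (hPmismatch : Pmismatch = ∑ k ∈ Finset.univ.filter
        (fun k : Fin n => (k : ℕ) < s ∧ χ - δs < lamhat k),
      σ ^ 2 * (1 / (χ - δs) - 1 / lamhat k)) :
    Pmismatch < Pideal + ((20 / 51) * s + (1 / 272) * K) * σ ^ 2 / χ :=
  stmt9_general hs hK1 hKs σ χ hσ hχ S Shat hS hShat hrank lam hlam_anti hlam_eig lamhat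
    hlamhat_anti hlamhat_eig habove hbelow δ0 δs hδ0 hδ0small hδs Pideal Pmismatch hPideal
    hPmismatch
end

section
/- (Perturbation bound for the Gaussian log-likelihood ratio term.) Let a, μ, μ̂ ∈ ℝⁿ, y ∈ ℝ, σ > 0, and let Σ, Σ̂ be real symmetric positive semidefinite n×n matrices. Write z = y − aᵀμ, ϱ = aᵀ(μ̂ − μ), β = ‖a‖₂², and δ = ‖Σ̂ − Σ‖ (spectral norm). Then | (y − aᵀμ̂)²/(aᵀΣ̂a + σ²) − (y − aᵀμ)²/(aᵀΣa + σ²) | ≤ (ϱ² + 2|ϱ|·|z|)/σ² + z²·β·δ/σ⁴. -/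
/-! With `y - aᵀμ̂ = z - ϱ`, adding and subtracting `z²/(aᵀΣ̂a + σ²)` splits the difference into
`((z - ϱ)² - z²)/(aᵀΣ̂a + σ²)` and `z² (1/(aᵀΣ̂a + σ²) - 1/(aᵀΣa + σ²))`. Positive semidefiniteness
keeps both denominators at least `σ²`, so the first piece is at most `(ϱ² + 2|ϱ||z|)/σ²` and the
second at most `z² |aᵀ(Σ̂ - Σ)a|/σ⁴ ≤ z² ‖a‖₂² ‖Σ̂ - Σ‖/σ⁴`. -/

open Matrix

theorem abs_dotProduct_mulVec_le_specNorm_mul {n : ℕ} (M : Matrix (Fin n) (Fin n) ℝ)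
    (a : Fin n → ℝ) : |a ⬝ᵥ M *ᵥ a| ≤ specNorm M * ∑ i, a i ^ 2 := by
  set T := LinearMap.toContinuousLinearMap (Matrix.toEuclideanLin M)
  set x : EuclideanSpace ℝ (Fin n) := WithLp.toLp 2 a
  have hinner : a ⬝ᵥ M *ᵥ a = inner ℝ x (T x) := by
    simp [T, x, Matrix.toEuclideanLin, PiLp.inner_apply, dotProduct, Matrix.mulVec, mul_comm]
  have hnorm : ‖x‖ ^ 2 = ∑ i, a i ^ 2 := by simp [x, EuclideanSpace.real_norm_sq_eq]
  calc |a ⬝ᵥ M *ᵥ a| ≤ ‖x‖ * ‖T x‖ := hinner ▸ abs_real_inner_le_norm x (T x)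
    _ ≤ ‖x‖ * (‖T‖ * ‖x‖) := by gcongr; exact T.le_opNorm x
    _ = specNorm M * ∑ i, a i ^ 2 := by rw [← hnorm, specNorm]; ring

theorem abs_sub_sq_sub_sq_le (z ϱ : ℝ) : |(z - ϱ) ^ 2 - z ^ 2| ≤ ϱ ^ 2 + 2 * |ϱ| * |z| :=
  calc |(z - ϱ) ^ 2 - z ^ 2| = |ϱ ^ 2 - 2 * ϱ * z| := by ring_nf
    _ ≤ |ϱ ^ 2| + |2 * ϱ * z| := abs_sub _ _
    _ = ϱ ^ 2 + 2 * |ϱ| * |z| := by simp [abs_mul]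

theorem abs_inv_add_sub_inv_add_le {q q' s : ℝ} (hq : 0 ≤ q) (hq' : 0 ≤ q') (hs : 0 < s) :
    |(q' + s)⁻¹ - (q + s)⁻¹| ≤ |q' - q| / s ^ 2 := by
  have hq's : 0 < q' + s := by linarith
  have hqs : 0 < q + s := by linarith
  rw [inv_sub_inv hq's.ne' hqs.ne', abs_div, abs_of_pos (mul_pos hq's hqs),
    show q + s - (q' + s) = -(q' - q) by ring, abs_neg]
  gcongr
  nlinarith

theorem abs_sq_div_sub_sq_div_le (z ϱ : ℝ) {q q' s : ℝ} (hq : 0 ≤ q) (hq' : 0 ≤ q')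
    (hs : 0 < s) :
    |(z - ϱ) ^ 2 / (q' + s) - z ^ 2 / (q + s)|
      ≤ (ϱ ^ 2 + 2 * |ϱ| * |z|) / s + z ^ 2 * |q' - q| / s ^ 2 := by
  have hsplit : (z - ϱ) ^ 2 / (q' + s) - z ^ 2 / (q + s)
      = ((z - ϱ) ^ 2 - z ^ 2) / (q' + s) + z ^ 2 * ((q' + s)⁻¹ - (q + s)⁻¹) := by ring
  calc |(z - ϱ) ^ 2 / (q' + s) - z ^ 2 / (q + s)|
      ≤ |(z - ϱ) ^ 2 - z ^ 2| / (q' + s) + z ^ 2 * |(q' + s)⁻¹ - (q + s)⁻¹| := by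
        rw [hsplit]
        refine (abs_add_le _ _).trans_eq ?_
        rw [abs_div, abs_of_pos (by linarith : 0 < q' + s), abs_mul, abs_of_nonneg (sq_nonneg z)]
    _ ≤ (ϱ ^ 2 + 2 * |ϱ| * |z|) / s + z ^ 2 * (|q' - q| / s ^ 2) := by
        gcongr
        · exact abs_sub_sq_sub_sq_le z ϱ
        · linarith
        · exact abs_inv_add_sub_inv_add_le hq hq' hs
    _ = (ϱ ^ 2 + 2 * |ϱ| * |z|) / s + z ^ 2 * |q' - q| / s ^ 2 := by ring

/-- Perturbation bound for the Gaussian log-likelihood ratio term. -/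
theorem stmt14 {n : ℕ} (a μ μhat : Fin n → ℝ) (y σ : ℝ) (hσ : 0 < σ)
    (S Shat : Matrix (Fin n) (Fin n) ℝ) (hS : S.PosSemidef) (hShat : Shat.PosSemidef)
    (z ϱ β δ : ℝ)
    (hz : z = y - a ⬝ᵥ μ) (hϱ : ϱ = a ⬝ᵥ (μhat - μ))
    (hβ : β = ∑ i, a i ^ 2) (hδ : δ = specNorm (Shat - S)) :
    |(y - a ⬝ᵥ μhat) ^ 2 / (a ⬝ᵥ Shat.mulVec a + σ ^ 2)
        - (y - a ⬝ᵥ μ) ^ 2 / (a ⬝ᵥ S.mulVec a + σ ^ 2)|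
      ≤ (ϱ ^ 2 + 2 * |ϱ| * |z|) / σ ^ 2 + z ^ 2 * β * δ / σ ^ 4 := by
  have hquad : |a ⬝ᵥ Shat *ᵥ a - a ⬝ᵥ S *ᵥ a| ≤ β * δ := by
    rw [hβ, hδ, mul_comm, ← dotProduct_sub, ← sub_mulVec]
    exact abs_dotProduct_mulVec_le_specNorm_mul (Shat - S) a
  have hy : y - a ⬝ᵥ μhat = z - ϱ := by rw [hz, hϱ, dotProduct_sub]; ring
  rw [hy, ← hz]
  calc _ ≤ (ϱ ^ 2 + 2 * |ϱ| * |z|) / σ ^ 2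
          + z ^ 2 * |a ⬝ᵥ Shat *ᵥ a - a ⬝ᵥ S *ᵥ a| / (σ ^ 2) ^ 2 :=
        abs_sq_div_sub_sq_div_le z ϱ (by simpa using hS.dotProduct_mulVec_nonneg a)
          (by simpa using hShat.dotProduct_mulVec_nonneg a) (by positivity)
    _ ≤ (ϱ ^ 2 + 2 * |ϱ| * |z|) / σ ^ 2 + z ^ 2 * β * δ / σ ^ 4 := by
        rw [mul_assoc (z ^ 2), ← pow_mul]
        gcongr
end

section
/- (Recursion for the projected mean mismatch.) Let Σ, Σ̂ be real symmetric positive semidefinite n×n matrices, û a unit eigenvector of Σ̂ with eigenvalue λ̂ ≥ 0, β > 0, σ > 0, and a = √β·û. Let μ, μ̂ ∈ ℝⁿ, y ∈ ℝ, and define the one-step mean updates μ̂′ = μ̂ + Σ̂ a (y − aᵀμ̂)/(βλ̂ + σ²) and μ′ = μ + Σ a (y − aᵀμ)/(aᵀΣa + σ²). Write c = aᵀ(Σ̂ − Σ)a, z = y − aᵀμ, and δ = ‖Σ̂ − Σ‖. If β·δ < βλ̂ + σ², then aᵀ(μ̂′ − μ′) = (σ²/(βλ̂ + σ²))·[ aᵀ(μ̂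 − μ) + c·z/(βλ̂ + σ² − c) ], and consequently |aᵀ(μ̂′ − μ′)| ≤ (1/(λ̂β/σ² + 1))·[ |aᵀ(μ̂ − μ)| + δ·|z|/((λ̂ − δ) + σ²/β) ]. -/
/-!
Along the measurement direction both updates are scalar Kalman steps: the residual `y - aᵀm`
is multiplied by `σ² / (aᵀMa + σ²)`, with `M = Σ̂` (where `aᵀΣ̂a = βλ̂`) or `M = Σ`. Subtracting
the two projected means gives the recursion with `c = aᵀΣ̂a - aᵀΣa`. For the bound,
`|c| ≤ ‖Σ̂ - Σ‖ ‖a‖² = βδ`, and `x ↦ x / (D - x)` is increasing below `D = βλ̂ + σ²`.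
-/

open MeasureTheory ProbabilityTheory Matrix BigOperators

lemma dotProduct_add_smul_mulVec_eq {ι : Type*} [Fintype ι] (M : Matrix ι ι ℝ) (a μ : ι → ℝ)
    {s r : ℝ} (y : ℝ) (hs : a ⬝ᵥ M *ᵥ a = s) (hsr : s + r ≠ 0) :
    a ⬝ᵥ (μ + ((s + r)⁻¹ * (y - a ⬝ᵥ μ)) • M *ᵥ a) = y + r * (a ⬝ᵥ μ - y) / (s + r) := by
  rw [dotProduct_add, dotProduct_smul, hs, smul_eq_mul]
  field_simp
  ring

lemma update_sub_update_eq {s t r p q y : ℝ} (hs : s + r ≠ 0) (ht : t + r ≠ 0) :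
    (y + r * (p - y) / (s + r)) - (y + r * (q - y) / (t + r)) =
      r / (s + r) * (p - q + (s - t) * (y - q) / (s + r - (s - t))) := by
  rw [show s + r - (s - t) = t + r by ring]
  field_simp
  ring

lemma abs_div_sub_self_le {c b D : ℝ} (hc : |c| ≤ b) (hb : b < D) :
    |c / (D - c)| ≤ b / (D - b) := by
  have hDb : 0 < D - b := by linarith
  have hDc : D - b ≤ D - c := by linarith [le_abs_self c]
  rw [abs_div, abs_of_pos (hDb.trans_le hDc)]
  exact div_le_div₀ ((abs_nonneg c).trans hc) hc hDb hDc

lemma abs_mul_add_div_le {r D x c z b : ℝ} (hr : 0 ≤ r) (hc : |c| ≤ b) (hb : b < D) :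
    |r / D * (x + c * z / (D - c))| ≤ r / D * (|x| + b * |z| / (D - b)) := by
  have hrD : 0 ≤ r / D := div_nonneg hr (by linarith [abs_nonneg c])
  rw [abs_mul, abs_of_nonneg hrD]
  gcongr
  calc |x + c * z / (D - c)| ≤ |x| + |c / (D - c)| * |z| := by
        rw [mul_div_right_comm, ← abs_mul]; exact abs_add_le _ _
    _ ≤ |x| + b / (D - b) * |z| := by gcongr; exact abs_div_sub_self_le hc hb
    _ = |x| + b * |z| / (D - b) := by ring

lemma abs_dotProduct_mulVec_le {n : ℕ} (M : Matrix (Fin n) (Fin n) ℝ) (a : Fin n → ℝ) :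
    |a ⬝ᵥ M *ᵥ a| ≤ specNorm M * (a ⬝ᵥ a) := by
  set x : EuclideanSpace ℝ (Fin n) := WithLp.toLp 2 a
  have hquad : a ⬝ᵥ M *ᵥ a = inner ℝ x (toEuclideanCLM (𝕜 := ℝ) M x) :=
    (inner_toEuclideanCLM M x x).symm
  have hnorm : a ⬝ᵥ a = ‖x‖ ^ 2 := by
    rw [← real_inner_self_eq_norm_sq, EuclideanSpace.inner_eq_star_dotProduct]
    simp [x]
  rw [hquad, hnorm]
  calc _ ≤ ‖x‖ * ‖toEuclideanCLM (𝕜 := ℝ) M x‖ := abs_real_inner_le_norm _ _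
    _ ≤ ‖x‖ * (specNorm M * ‖x‖) := by gcongr; exact (toEuclideanCLM (𝕜 := ℝ) M).le_opNorm x
    _ = specNorm M * ‖x‖ ^ 2 := by ring

theorem stmt15_general {n : ℕ} (S Shat : Matrix (Fin n) (Fin n) ℝ)
    (hS : S.PosSemidef)
    (uhat : Fin n → ℝ) (hu : uhat ⬝ᵥ uhat = 1)
    (lamhat : ℝ) (heig : Shat.mulVec uhat = lamhat • uhat)
    (β σ : ℝ) (hβ : 0 < β) (hσ : 0 < σ)
    (a : Fin n → ℝ) (ha : a = Real.sqrt β • uhat)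
    (μ μhat : Fin n → ℝ) (y : ℝ)
    (μhat' μ' : Fin n → ℝ)
    (hμhat' : μhat' = μhat + ((β * lamhat + σ ^ 2)⁻¹ * (y - a ⬝ᵥ μhat)) • Shat.mulVec a)
    (hμ' : μ' = μ + ((a ⬝ᵥ S.mulVec a + σ ^ 2)⁻¹ * (y - a ⬝ᵥ μ)) • S.mulVec a)
    (c z δ : ℝ)
    (hc : c = a ⬝ᵥ (Shat - S).mulVec a) (hz : z = y - a ⬝ᵥ μ)
    (hδ : δ = specNorm (Shat - S))
    (hsmall : β * δ < β * lamhat + σ ^ 2) :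
    a ⬝ᵥ (μhat' - μ') = (σ ^ 2 / (β * lamhat + σ ^ 2)) *
        (a ⬝ᵥ (μhat - μ) + c * z / (β * lamhat + σ ^ 2 - c)) ∧
      |a ⬝ᵥ (μhat' - μ')| ≤ (1 / (lamhat * β / σ ^ 2 + 1)) *
        (|a ⬝ᵥ (μhat - μ)| + δ * |z| / ((lamhat - δ) + σ ^ 2 / β)) := by
  have hβ_sq : Real.sqrt β * Real.sqrt β = β := Real.mul_self_sqrt hβ.le
  have ha_a : a ⬝ᵥ a = β := by
    rw [ha, smul_dotProduct, dotProduct_smul, hu, smul_eq_mul, smul_eq_mul, mul_one, hβ_sq]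
  have hShat_a : a ⬝ᵥ Shat *ᵥ a = β * lamhat := by
    rw [ha, mulVec_smul, heig, smul_dotProduct, dotProduct_smul, dotProduct_smul, hu]
    simp only [smul_eq_mul, mul_one, ← mul_assoc, hβ_sq]
  have hS_denom : 0 < a ⬝ᵥ S *ᵥ a + σ ^ 2 := by
    have := hS.dotProduct_mulVec_nonneg a
    simp only [star_trivial] at this
    positivity
  have hc_eq : c = β * lamhat - a ⬝ᵥ S *ᵥ a := by rw [hc, sub_mulVec, dotProduct_sub, hShat_a]
  have hcδ : |c| ≤ β * δ := by
    simpa [hc, hδ, ha_a, mul_comm] using abs_dotProduct_mulVec_le (Shat - S) a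
  have hδ_nonneg : 0 ≤ δ := hδ ▸ norm_nonneg _
  have hD : 0 < β * lamhat + σ ^ 2 := (mul_nonneg hβ.le hδ_nonneg).trans_lt hsmall
  have hrecursion : a ⬝ᵥ (μhat' - μ') = σ ^ 2 / (β * lamhat + σ ^ 2) *
      (a ⬝ᵥ (μhat - μ) + c * z / (β * lamhat + σ ^ 2 - c)) := by
    rw [dotProduct_sub, hμhat', hμ', dotProduct_add_smul_mulVec_eq Shat a μhat y hShat_a hD.ne',
      dotProduct_add_smul_mulVec_eq S a μ y rfl hS_denom.ne', dotProduct_sub, hz, hc_eq]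
    exact update_sub_update_eq hD.ne' hS_denom.ne'
  refine ⟨hrecursion, ?_⟩
  have hgain : 1 / (lamhat * β / σ ^ 2 + 1) = σ ^ 2 / (β * lamhat + σ ^ 2) := by
    field_simp
  have hmargin : δ * |z| / ((lamhat - δ) + σ ^ 2 / β) =
      β * δ * |z| / (β * lamhat + σ ^ 2 - β * δ) := by
    rw [show (lamhat - δ) + σ ^ 2 / β = (β * lamhat + σ ^ 2 - β * δ) / β by field_simp; ring,
      div_div_eq_mul_div]
    ring
  rw [hgain, hmargin, hrecursion]
  exact abs_mul_add_div_le (by positivity) hcδ hsmall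

/-- Recursion for the projected mean mismatch. -/
theorem stmt15 {n : ℕ} (S Shat : Matrix (Fin n) (Fin n) ℝ)
    (hS : S.PosSemidef) (hShat : Shat.PosSemidef)
    (uhat : Fin n → ℝ) (hu : uhat ⬝ᵥ uhat = 1)
    (lamhat : ℝ) (hlam : 0 ≤ lamhat) (heig : Shat.mulVec uhat = lamhat • uhat)
    (β σ : ℝ) (hβ : 0 < β) (hσ : 0 < σ)
    (a : Fin n → ℝ) (ha : a = Real.sqrt β • uhat)
    (μ μhat : Fin n → ℝ) (y : ℝ)
    (μhat' μ' : Fin n → ℝ)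
    (hμhat' : μhat' = μhat + ((β * lamhat + σ ^ 2)⁻¹ * (y - a ⬝ᵥ μhat)) • Shat.mulVec a)
    (hμ' : μ' = μ + ((a ⬝ᵥ S.mulVec a + σ ^ 2)⁻¹ * (y - a ⬝ᵥ μ)) • S.mulVec a)
    (c z δ : ℝ)
    (hc : c = a ⬝ᵥ (Shat - S).mulVec a) (hz : z = y - a ⬝ᵥ μ)
    (hδ : δ = specNorm (Shat - S))
    (hsmall : β * δ < β * lamhat + σ ^ 2) :
    a ⬝ᵥ (μhat' - μ') = (σ ^ 2 / (β * lamhat + σ ^ 2)) *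
        (a ⬝ᵥ (μhat - μ) + c * z / (β * lamhat + σ ^ 2 - c)) ∧
      |a ⬝ᵥ (μhat' - μ')| ≤ (1 / (lamhat * β / σ ^ 2 + 1)) *
        (|a ⬝ᵥ (μhat - μ)| + δ * |z| / ((lamhat - δ) + σ ^ 2 / β)) :=
  stmt15_general S Shat hS uhat hu lamhat heig β σ hβ hσ a ha μ μhat y μhat' μ' hμhat' hμ' c z δ hc
    hz hδ hsmall
end

section
/- (One-sparse measurement: one-step trace recursion.) Let Σ be a real symmetric positive semidefinite n×n matrix, σ > 0, γ > 0, and ρ ∈ [0, 1). Let j be an index maximizing the diagonal entries of Σ, with d = Σ_{jj} > 0. Assume Σ_{ij}² ≥ ρ·Σ_{ii}·Σ_{jj} for every index i, and let the power β satisfy β ≥ σ²/(γ·d). Then the one-sparse update Σ′ = Σ − β·Σ e_j e_jᵀ Σ/(β·Σ_{jj} + σ²), where e_j is the j-th standard basis vector, satisfies tr(Σ′) ≤ [ 1 − ((n−1)ρ + 1)/(n(1+γ)) ]·tr(Σ). -/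
open MeasureTheory ProbabilityTheory Matrix BigOperators

/-!
Measuring coordinate `j` removes `c · ∑ᵢ Σᵢⱼ²` from the trace, where `c = β / (β d + σ²)`.
The power condition gives `c ≥ 1 / ((1 + γ) d)`, and the correlation condition gives
`∑ᵢ Σᵢⱼ² ≥ d² + ρ d (tr Σ - d)`, so at least `(d + ρ (tr Σ - d)) / (1 + γ)` is removed.
Since `d` is the largest diagonal entry, `tr Σ ≤ n d`, hence
`d + ρ (tr Σ - d) = (1 - ρ) d + ρ tr Σ ≥ ((n - 1) ρ + 1) tr Σ / n`.
-/

namespace Matrix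

variable {ι R : Type*} [Fintype ι]

theorem trace_le_card_mul_of_diag_le {A : Matrix ι ι ℝ} {j : ι} (hj : ∀ i, A i i ≤ A j j) :
    A.trace ≤ Fintype.card ι * A j j := by
  have := Finset.sum_le_card_nsmul Finset.univ A.diag (A j j) fun i _ => hj i
  rwa [Finset.card_univ, nsmul_eq_mul] at this

variable [DecidableEq ι]

theorem IsSymm.trace_vecMulVec_mulVec_single [CommSemiring R] {A : Matrix ι ι R}
    (hA : A.IsSymm) (j : ι) :
    (vecMulVec (A *ᵥ Pi.single j 1) (Pi.single j 1 ᵥ* A)).trace = ∑ i, A i j ^ 2 := by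
  simp only [trace_vecMulVec, mulVec_single_one, single_one_vecMul, dotProduct, col_apply,
    row_apply, hA.apply, sq]

theorem sq_add_mul_trace_sub_le_sum_sq {A : Matrix ι ι ℝ} {ρ : ℝ} {j : ι}
    (hcorr : ∀ i, ρ * (A i i * A j j) ≤ A i j ^ 2) :
    A j j ^ 2 + ρ * A j j * (A.trace - A j j) ≤ ∑ i, A i j ^ 2 := by
  have htrace : A.trace - A j j = ∑ i ∈ Finset.univ.erase j, A i i := by
    rw [trace, ← Finset.add_sum_erase _ _ (Finset.mem_univ j), diag_apply]
    simp
  rw [htrace, ← Finset.add_sum_erase _ _ (Finset.mem_univ j), Finset.mul_sum]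
  gcongr with i
  linarith [hcorr i]

end Matrix

theorem one_div_le_div_mul_add_sq {β γ σ d : ℝ} (hσ : σ ≠ 0) (hγ : 0 < γ) (hd : 0 < d)
    (hβ : σ ^ 2 / (γ * d) ≤ β) :
    1 / ((1 + γ) * d) ≤ β / (β * d + σ ^ 2) := by
  have hσβ : σ ^ 2 ≤ β * (γ * d) := (div_le_iff₀ (by positivity)).mp hβ
  have hβ0 : 0 ≤ β := le_trans (by positivity) hβ
  rw [div_le_div_iff₀ (by positivity) (by positivity)]
  linarith

/-- One-sparse measurement: one-step trace recursion. -/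
theorem stmt16 {n : ℕ} (S : Matrix (Fin n) (Fin n) ℝ) (hS : S.PosSemidef)
    (σ γ ρ : ℝ) (hσ : 0 < σ) (hγ : 0 < γ) (hρ : ρ ∈ Set.Ico (0 : ℝ) 1)
    (j : Fin n) (hj : ∀ i, S i i ≤ S j j) (d : ℝ) (hd : d = S j j) (hdpos : 0 < d)
    (hcorr : ∀ i, ρ * (S i i * S j j) ≤ (S i j) ^ 2)
    (β : ℝ) (hβ : β ≥ σ ^ 2 / (γ * d))
    (S' : Matrix (Fin n) (Fin n) ℝ)
    (hS' : S' = S - (β / (β * S j j + σ ^ 2)) •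
      Matrix.vecMulVec (S.mulVec (Pi.single j 1)) ((Pi.single j 1 : Fin n → ℝ) ᵥ* S)) :
    S'.trace ≤ (1 - ((n - 1) * ρ + 1) / (n * (1 + γ))) * S.trace := by
  subst hd
  have hn : (0 : ℝ) < n := by exact_mod_cast Fin.pos j
  have hcoeff := one_div_le_div_mul_add_sq hσ.ne' hγ hdpos hβ
  have hcol := sq_add_mul_trace_sub_le_sum_sq hcorr
  have hmean : ((n - 1) * ρ + 1) / n * S.trace ≤ S j j + ρ * (S.trace - S j j) := by
    have htrace : S.trace ≤ n * S j j := by simpa using trace_le_card_mul_of_diag_le hj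
    rw [div_mul_eq_mul_div, div_le_iff₀ hn]
    nlinarith [mul_le_mul_of_nonneg_left htrace (sub_nonneg.2 hρ.2.le)]
  have hsymm : S.IsSymm := isHermitian_iff_isSymm.mp hS.isHermitian
  rw [hS', trace_sub, trace_smul, hsymm.trace_vecMulVec_mulVec_single, smul_eq_mul]
  calc S.trace - β / (β * S j j + σ ^ 2) * ∑ i, S i j ^ 2
      ≤ S.trace - 1 / ((1 + γ) * S j j) * (S j j ^ 2 + ρ * S j j * (S.trace - S j j)) := by
        have hQ : 0 ≤ ∑ i, S i j ^ 2 := by positivity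
        have ha : 0 ≤ 1 / ((1 + γ) * S j j) := by positivity
        linarith [mul_le_mul_of_nonneg_left hcol ha, mul_le_mul_of_nonneg_right hcoeff hQ]
    _ = S.trace - (S j j + ρ * (S.trace - S j j)) / (1 + γ) := by
        field_simp
    _ ≤ S.trace - ((n - 1) * ρ + 1) / n * S.trace / (1 + γ) := by
        gcongr
    _ = (1 - ((n - 1) * ρ + 1) / (n * (1 + γ))) * S.trace := by
        field_simp
end

section
/- (One-sparse measurement: iterated trace bound.) Let σ > 0, γ > 0, and let Σ₀ be a real symmetric positive semidefinite n×n matrix. For k = 1,…,K suppose: j_{k−1} is an index maximizing the diagonal entries of Σ_{k−1}, with (Σ_{k−1})_{j_{k−1} j_{k−1}} > 0; the power satisfies β_k ≥ σ²/(γ·(Σ_{k−1})_{j_{k−1} j_{k−1}}); and Σ_k = Σ_{k−1} − β_k·Σ_{k−1} e_{j_{k−1}} e_{j_{k−1}}ᵀ Σ_{k−1}/(β_k·(Σ_{k−1})_{j_{k−1} j_{k−1}} + σ²). Then tr(Σ_K) ≤ (1 − 1/(n(1+γ)))^K · tr(Σ₀). -/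
open MeasureTheory ProbabilityTheory Matrix BigOperators

lemma step_bound {n : ℕ} (σ γ : ℝ) (hσ : 0 < σ) (hγ : 0 < γ)
    (A : Matrix (Fin n) (Fin n) ℝ) (hsymm : A.IsSymm) (j : Fin n) (β : ℝ)
    (hmax : ∀ i, A i i ≤ A j j) (hd : 0 < A j j)
    (hβ : β ≥ σ ^ 2 / (γ * A j j)) :
    (A - (β / (β * A j j + σ ^ 2)) •
      Matrix.vecMulVec (A.mulVec (Pi.single j 1)) ((Pi.single j 1 : Fin n → ℝ) ᵥ* A)).trace
      ≤ (1 - 1 / (n * (1 + γ))) * A.trace := by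
  have hn : 0 < (n : ℝ) := by
    have : (0:ℕ) < n := Fin.pos j
    exact_mod_cast this
  have hσ2 : 0 < σ ^ 2 := by positivity
  have hβpos : 0 < β := lt_of_lt_of_le (by positivity) hβ
  have hden : 0 < β * A j j + σ ^ 2 := by positivity
  -- compute the vectors
  have hu : A.mulVec (Pi.single j 1) = fun i => A i j := by
    funext i
    simp [Matrix.mulVec, dotProduct, Pi.single_apply, Finset.sum_ite_eq]
  have hv : (Pi.single j 1 : Fin n → ℝ) ᵥ* A = fun i => A i j := by
    funext i
    simp [Matrix.vecMul, dotProduct, Pi.single_apply, Finset.sum_ite_eq]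
    simpa [Matrix.transpose_apply] using hsymm.apply i j
  have htr : (Matrix.vecMulVec (A.mulVec (Pi.single j 1)) ((Pi.single j 1 : Fin n → ℝ) ᵥ* A)).trace
      = ∑ i, (A i j) ^ 2 := by
    rw [hu, hv]
    simp [Matrix.trace, Matrix.diag, Matrix.vecMulVec_apply, sq]
  have hS : A j j ^ 2 ≤ ∑ i, (A i j) ^ 2 := by
    have := Finset.single_le_sum (f := fun i => (A i j)^2) (fun i _ => sq_nonneg _) (Finset.mem_univ j)
    simpa using this
  have key : (A - (β / (β * A j j + σ ^ 2)) •
      Matrix.vecMulVec (A.mulVec (Pi.single j 1)) ((Pi.single j 1 : Fin n → ℝ) ᵥ* A)).trace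
      = A.trace - (β / (β * A j j + σ ^ 2)) * ∑ i, (A i j) ^ 2 := by
    rw [Matrix.trace_sub, Matrix.trace_smul, htr]; simp
  rw [key]
  have h1 : (β / (β * A j j + σ ^ 2)) * A j j ^ 2 ≤ (β / (β * A j j + σ ^ 2)) * ∑ i, (A i j) ^ 2 := by
    apply mul_le_mul_of_nonneg_left hS (by positivity)
  have h2 : A j j / (1 + γ) ≤ β * A j j ^ 2 / (β * A j j + σ ^ 2) := by
    rw [div_le_div_iff₀ (by positivity) hden]
    have hb : σ ^ 2 ≤ γ * (β * A j j) := by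
      rw [ge_iff_le, div_le_iff₀ (by positivity)] at hβ
      nlinarith
    nlinarith
  have heq : β / (β * A j j + σ ^ 2) * A j j ^ 2 = β * A j j ^ 2 / (β * A j j + σ ^ 2) := by ring
  have h3 : A.trace ≤ n * A j j := by
    have : A.trace = ∑ i, A i i := rfl
    rw [this]
    calc ∑ i, A i i ≤ ∑ _i : Fin n, A j j := Finset.sum_le_sum (fun i _ => hmax i)
      _ = n * A j j := by simp [Finset.sum_const, mul_comm]
  have h4 : A.trace / (n * (1 + γ)) ≤ A j j / (1 + γ) := by
    rw [div_le_div_iff₀ (by positivity) (by positivity)]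
    nlinarith
  have : A.trace - (β / (β * A j j + σ ^ 2)) * ∑ i, (A i j) ^ 2
      ≤ A.trace - A.trace / (n * (1 + γ)) := by linarith
  calc _ ≤ A.trace - A.trace / (n * (1 + γ)) := this
    _ = (1 - 1 / (n * (1 + γ))) * A.trace := by ring

lemma sub_symm {n : ℕ} (A : Matrix (Fin n) (Fin n) ℝ) (hA : A.IsSymm) (j : Fin n) (c : ℝ) :
    (A - c • Matrix.vecMulVec (A.mulVec (Pi.single j 1))
      ((Pi.single j 1 : Fin n → ℝ) ᵥ* A)).IsSymm := by
  have hu : A.mulVec (Pi.single j 1) = fun i => A i j := by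
    funext i
    simp [Matrix.mulVec, dotProduct, Pi.single_apply, Finset.sum_ite_eq]
  have hv : (Pi.single j 1 : Fin n → ℝ) ᵥ* A = fun i => A i j := by
    funext i
    simp [Matrix.vecMul, dotProduct, Pi.single_apply, Finset.sum_ite_eq]
    simpa [Matrix.transpose_apply] using hA.apply i j
  unfold Matrix.IsSymm
  rw [Matrix.transpose_sub, Matrix.transpose_smul, hA, hu, hv]
  congr 1
  ext i k
  simp [Matrix.vecMulVec_apply, Matrix.transpose_apply, mul_comm]

/-- One-sparse measurement: iterated trace bound. -/
theorem stmt17 {n K : ℕ} (σ γ : ℝ) (hσ : 0 < σ) (hγ : 0 < γ)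
    (Sig : ℕ → Matrix (Fin n) (Fin n) ℝ) (hPSD : (Sig 0).PosSemidef)
    (j : ℕ → Fin n) (β : ℕ → ℝ)
    (hmax : ∀ k < K, ∀ i, Sig k i i ≤ Sig k (j k) (j k))
    (hdpos : ∀ k < K, 0 < Sig k (j k) (j k))
    (hβ : ∀ k < K, β (k + 1) ≥ σ ^ 2 / (γ * Sig k (j k) (j k)))
    (hrec : ∀ k < K, Sig (k + 1) = Sig k -
      (β (k + 1) / (β (k + 1) * Sig k (j k) (j k) + σ ^ 2)) •
        Matrix.vecMulVec ((Sig k).mulVec (Pi.single (j k) 1))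
          ((Pi.single (j k) 1 : Fin n → ℝ) ᵥ* Sig k)) :
    (Sig K).trace ≤ (1 - 1 / (n * (1 + γ))) ^ K * (Sig 0).trace := by
  induction K with
  | zero => simp
  | succ K ih =>
    have hsymm : ∀ k ≤ K, (Sig k).IsSymm := by
      intro k hk
      induction k with
      | zero => simpa [Matrix.IsSymm, Matrix.conjTranspose_eq_transpose_of_trivial] using hPSD.1
      | succ m ihm =>
        rw [hrec m (by omega)]
        exact sub_symm _ (ihm (by omega)) _ _
    have hK : K < K + 1 := Nat.lt_succ_self K
    have step := step_bound σ γ hσ hγ (Sig K) (hsymm K le_rfl) (j K) (β (K + 1))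
      (hmax K hK) (hdpos K hK) (hβ K hK)
    have hc : 0 ≤ 1 - 1 / ((n : ℝ) * (1 + γ)) := by
      rcases Nat.eq_zero_or_pos n with h | h
      · simp [h]
      · have h1 : (1 : ℝ) ≤ n := by exact_mod_cast h
        have h2 : (1 : ℝ) ≤ n * (1 + γ) := by nlinarith
        have := div_le_one_of_le₀ h2 (by positivity)
        linarith
    have ih' := ih (fun k hk i => hmax k (by omega) i) (fun k hk => hdpos k (by omega))
      (fun k hk => hβ k (by omega)) (fun k hk => hrec k (by omega))
    calc (Sig (K + 1)).trace ≤ (1 - 1 / (n * (1 + γ))) * (Sig K).trace := by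
            rw [hrec K hK]; exact step
      _ ≤ (1 - 1 / (n * (1 + γ))) * ((1 - 1 / (n * (1 + γ))) ^ K * (Sig 0).trace) :=
            mul_le_mul_of_nonneg_left ih' hc
      _ = (1 - 1 / (n * (1 + γ))) ^ (K + 1) * (Sig 0).trace := by ring
end
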